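/- arXiv:2302.13767 — 8 statements merged into one kernel-verified Lean document; each statement's English description precedes it below -/
import Mathlib

section
/- If π is a Fishburn permutation of length n (i.e., π avoids the bivincular pattern where there exist indices i<j with π_i π_{i+1} π_j forming a 231 pattern and π_i = π_j + 1) that also avoids the classical pattern 321, then either π_1 = 1 or π_2 = 1. -/
/-- A permutation `π` of `Fin n` contains the classical pattern `p` (given as a
function `Fin k → ℕ` listing the pattern's entries). -/
def Contains {n k : ℕ} (π : Equiv.Perm (Fin n)) (p : Fin k → ℕ) : Prop :=
  ∃ f : Fin k → Fin n, StrictMono f ∧ ∀ i j, p i < p j ↔ π (f i) < π (f j)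

/-- Classical pattern avoidance. -/
def Avoids {n k : ℕ} (π : Equiv.Perm (Fin n)) (p : Fin k → ℕ) : Prop :=
  ¬ Contains π p

/-- A permutation is Fishburn if there are no indices `i < j` with
`π i, π (i+1), π j` forming a 231 pattern and `π i = π j + 1`. -/
def IsFishburn {n : ℕ} (π : Equiv.Perm (Fin n)) : Prop :=
  ¬ ∃ (i j : ℕ) (hij : i + 1 < j) (hj : j < n),
      π ⟨i, by omega⟩ < π ⟨i + 1, by omega⟩ ∧
      π ⟨j, hj⟩ < π ⟨i, by omega⟩ ∧
      (π ⟨i, by omega⟩ : ℕ) = (π ⟨j, hj⟩ : ℕ) + 1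

/-- Helper: three descending entries at increasing positions witness a 321 pattern. -/
lemma contains321_of_descend {n : ℕ} (π : Equiv.Perm (Fin n)) (a b c : Fin n)
    (hab : a < b) (hbc : b < c) (h1 : π b < π a) (h2 : π c < π b) :
    Contains π ![3, 2, 1] := by
  have h3 : π c < π a := h2.trans h1
  refine ⟨![a, b, c], ?_, ?_⟩
  · intro i j hij
    fin_cases i <;> fin_cases j <;>
      first
        | exact absurd hij (by decide)
        | exact hab
        | exact hbc
        | exact hab.trans hbc
  · intro i j
    fin_cases i <;> fin_cases j <;>
      first
        | exact iff_of_false (by decide) (by exact lt_irrefl _)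
        | exact iff_of_false (by decide) (by exact not_lt.2 h1.le)
        | exact iff_of_false (by decide) (by exact not_lt.2 h2.le)
        | exact iff_of_false (by decide) (by exact not_lt.2 h3.le)
        | exact iff_of_true (by decide) (by exact h1)
        | exact iff_of_true (by decide) (by exact h2)
        | exact iff_of_true (by decide) (by exact h3)

set_option maxHeartbeats 1000000 in
theorem fishburn_321_first_or_second (n : ℕ) (hn : 2 ≤ n) (π : Equiv.Perm (Fin n))
    (hfish : IsFishburn π) (h321 : Avoids π ![3, 2, 1]) :
    π ⟨0, by omega⟩ = ⟨0, by omega⟩ ∨ π ⟨1, by omega⟩ = ⟨0, by omega⟩ := by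
  by_contra hcon
  push_neg at hcon
  obtain ⟨h0, h1⟩ := hcon
  have h01 : (⟨0, by omega⟩ : Fin n) ≠ ⟨1, by omega⟩ := by simp [Fin.ext_iff]
  -- position of value 0
  obtain ⟨k, hπk⟩ : ∃ k : Fin n, π k = ⟨0, by omega⟩ :=
    ⟨π.symm ⟨0, by omega⟩, π.apply_symm_apply _⟩
  have hk0 : k ≠ ⟨0, by omega⟩ := fun h => h0 (h ▸ hπk)
  have hk1 : k ≠ ⟨1, by omega⟩ := fun h => h1 (h ▸ hπk)
  have hk2 : 2 ≤ (k : ℕ) := by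
    rw [Fin.ne_iff_vne] at hk0 hk1
    simp only [] at hk0 hk1
    omega
  have hπkv : (π k : ℕ) = 0 := by rw [hπk]
  have hne : π ⟨0, by omega⟩ ≠ π ⟨1, by omega⟩ := fun h => h01 (π.injective h)
  have hp0 : (0:ℕ) < (π ⟨0, by omega⟩ : ℕ) := by
    rcases Nat.eq_zero_or_pos (π ⟨0, by omega⟩ : ℕ) with h | h
    · exact absurd (Fin.ext h) h0
    · exact h
  have hp1 : (0:ℕ) < (π ⟨1, by omega⟩ : ℕ) := by
    rcases Nat.eq_zero_or_pos (π ⟨1, by omega⟩ : ℕ) with h | h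
    · exact absurd (Fin.ext h) h1
    · exact h
  -- π 0 < π 1, else 321 pattern with (0,1,k)
  have hasc : π ⟨0, by omega⟩ < π ⟨1, by omega⟩ := by
    rcases lt_or_gt_of_ne hne with h | h
    · exact h
    · exact absurd (contains321_of_descend π ⟨0, by omega⟩ ⟨1, by omega⟩ k
        (by simp only [Fin.lt_def]; omega) (by simp only [Fin.lt_def]; omega) h
        (by simp only [Fin.lt_def]; omega)) h321
  have hascv : (π ⟨0, by omega⟩ : ℕ) < (π ⟨1, by omega⟩ : ℕ) := Fin.lt_def.mp hasc
  -- position q of value π 0 - 1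
  have hb : (π ⟨0, by omega⟩ : ℕ) - 1 < n :=
    lt_of_le_of_lt (Nat.sub_le _ _) (π ⟨0, by omega⟩).isLt
  obtain ⟨q, hπq⟩ : ∃ q : Fin n, π q = ⟨(π ⟨0, by omega⟩ : ℕ) - 1, hb⟩ :=
    ⟨π.symm _, π.apply_symm_apply _⟩
  have hπqv : (π q : ℕ) = (π ⟨0, by omega⟩ : ℕ) - 1 := congrArg Fin.val hπq
  have hq0 : q ≠ ⟨0, by omega⟩ := by
    intro h; rw [h] at hπqv; omega
  have hq1 : q ≠ ⟨1, by omega⟩ := by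
    intro h; rw [h] at hπqv; omega
  have hq2 : 2 ≤ (q : ℕ) := by
    rw [Fin.ne_iff_vne] at hq0 hq1
    simp only [] at hq0 hq1
    omega
  apply hfish
  refine ⟨0, (q : ℕ), by omega, q.isLt, ?_, ?_, ?_⟩
  · show π ⟨0, by omega⟩ < π ⟨1, by omega⟩
    exact hasc
  · show π q < π ⟨0, by omega⟩
    exact Fin.lt_def.mpr (by omega)
  · show (π ⟨0, by omega⟩ : ℕ) = (π q : ℕ) + 1
    omega
end

section
/- For each pattern σ in {132, 213, 312, 3142}, the set of Fishburn permutations of length n avoiding 321 and σ equals the set of all permutations of length n avoiding 231, 321, and σ. -/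
section Helpers
variable {n : ℕ} (π : Equiv.Perm (Fin n))

lemma contains231 {a b c : Fin n} (hab : a < b) (hbc : b < c)
    (h1 : (π a : ℕ) < π b) (h2 : (π c : ℕ) < π a) : Contains π ![2,3,1] := by
  refine ⟨![a,b,c], ?_, ?_⟩
  · intro i j hij
    fin_cases i <;> fin_cases j <;> simp_all
    exact lt_trans hab hbc
  · intro i j
    fin_cases i <;> fin_cases j <;> simp <;> (first | rw [Fin.lt_def] | rw [Fin.le_def]) <;> omega

lemma contains321 {a b c : Fin n} (hab : a < b) (hbc : b < c)
    (h1 : (π b : ℕ) < π a) (h2 : (π c : ℕ) < π b) : Contains π ![3,2,1] := by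
  refine ⟨![a,b,c], ?_, ?_⟩
  · intro i j hij
    fin_cases i <;> fin_cases j <;> simp_all
    exact lt_trans hab hbc
  · intro i j
    fin_cases i <;> fin_cases j <;> simp <;> (first | rw [Fin.lt_def] | rw [Fin.le_def]) <;> omega

lemma contains3142 {a b c d : Fin n} (hab : a < b) (hbc : b < c) (hcd : c < d)
    (h1 : (π b : ℕ) < π d) (h2 : (π d : ℕ) < π a) (h3 : (π a : ℕ) < π c) :
    Contains π ![3,1,4,2] := by
  refine ⟨![a,b,c,d], ?_, ?_⟩
  · intro i j hij
    fin_cases i <;> fin_cases j <;> simp_all <;>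
      first
        | exact lt_trans hab hbc
        | exact lt_trans hbc hcd
        | exact lt_trans hab (lt_trans hbc hcd)
  · intro i j
    fin_cases i <;> fin_cases j <;> simp <;> (first | rw [Fin.lt_def] | rw [Fin.le_def]) <;> omega

lemma contains_sub {k m : ℕ} {p : Fin k → ℕ} {q : Fin m → ℕ} (g : Fin m → Fin k)
    (hg : StrictMono g) (hpq : ∀ i j, q i < q j ↔ p (g i) < p (g j)) :
    Contains π p → Contains π q := by
  rintro ⟨f, hf, h⟩
  exact ⟨f ∘ g, hf.comp hg, fun i j => (hpq i j).trans (h _ _)⟩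

lemma fishburn_of_avoids231 (h : Avoids π ![2,3,1]) : IsFishburn π := by
  rintro ⟨i, j, hij, hj, h1, h2, h3⟩
  exact h (contains231 π (a := ⟨i, by omega⟩) (b := ⟨i+1, by omega⟩) (c := ⟨j, hj⟩)
    (by simp [Fin.lt_def]) (by simp [Fin.lt_def]; omega) h1 h2)

/-- Key lemma: a Fishburn, 321-avoiding permutation with a 231 occurrence contains 3142. -/
lemma key (hF : IsFishburn π) (h321 : Avoids π ![3,2,1]) :
    ∀ v : ℕ, ∀ a b c : Fin n, (π a : ℕ) ≤ v → a < b → b < c →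
      (π c : ℕ) < π a → (π a : ℕ) < π b → Contains π ![3,1,4,2] := by
  intro v
  induction v with
  | zero => intro a b c hv _ _ hca _; omega
  | succ v ihv =>
    -- inner induction on the gap b - a
    suffices H : ∀ g : ℕ, ∀ a b c : Fin n, (b : ℕ) - a ≤ g → (π a : ℕ) ≤ v + 1 → a < b → b < c →
        (π c : ℕ) < π a → (π a : ℕ) < π b → Contains π ![3,1,4,2] by
      intro a b c hv hab hbc hca hab'
      exact H ((b : ℕ) - a) a b c le_rfl hv hab hbc hca hab'
    intro g
    induction g with
    | zero =>
      intro a b c hg hv hab hbc hca hab'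
      have : (a : ℕ) < b := hab
      omega
    | succ g ihg =>
      intro a b c hg hv hab hbc hca hab'
      have hab'' : (a : ℕ) < b := hab
      have hbc'' : (b : ℕ) < c := hbc
      by_cases hadj : (b : ℕ) = a + 1
      · -- Step 2: adjacent case; use the Fishburn condition
        -- First, π a ≠ π c + 1
        have hne : (π a : ℕ) ≠ (π c : ℕ) + 1 := by
          intro heq
          apply hF
          refine ⟨a, c, by omega, c.isLt, ?_, ?_, ?_⟩
          · have : (⟨(a : ℕ), by omega⟩ : Fin n) = a := rfl
            rw [this]
            have : (⟨(a : ℕ) + 1, by omega⟩ : Fin n) = b := by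
              apply Fin.ext; simp [hadj]
            rw [this]; exact hab'
          · have h1 : (⟨(a : ℕ), by omega⟩ : Fin n) = a := rfl
            have h2 : (⟨(c : ℕ), c.isLt⟩ : Fin n) = c := rfl
            rw [h1, h2]; exact hca
          · exact heq
        have hge2 : (π c : ℕ) + 2 ≤ π a := by omega
        -- position d of the value π a - 1
        set d : Fin n := π.symm ⟨(π a : ℕ) - 1, by omega⟩ with hd
        have hπd : (π d : ℕ) = (π a : ℕ) - 1 := by
          rw [hd]; simp
        have hda : d ≠ a := by
          intro h; rw [h] at hπd; omega
        have hdb : d ≠ b := by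
          intro h; rw [h] at hπd; omega
        have hdc : d ≠ c := by
          intro h; rw [h] at hπd; omega
        -- d cannot be to the right of b
        have hdlt : (d : ℕ) < a := by
          by_contra hge
          push_neg at hge
          have hd2 : (a : ℕ) + 1 < d := by
            rcases lt_or_eq_of_le hge with h | h
            · rcases Nat.lt_or_ge ((a:ℕ)+1) d with h' | h'
              · exact h'
              · exfalso; apply hdb; apply Fin.ext; omega
            · exfalso; exact hda (Fin.ext h.symm)
          apply hF
          refine ⟨a, d, hd2, d.isLt, ?_, ?_, ?_⟩
          · have e1 : (⟨(a : ℕ), by omega⟩ : Fin n) = a := rfl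
            have e2 : (⟨(a : ℕ) + 1, by omega⟩ : Fin n) = b := by
              apply Fin.ext; simp [hadj]
            rw [e1, e2]; exact hab'
          · have e1 : (⟨(a : ℕ), by omega⟩ : Fin n) = a := rfl
            have e2 : (⟨(d : ℕ), d.isLt⟩ : Fin n) = d := rfl
            rw [e1, e2]
            show (π d : ℕ) < π a
            omega
          · show (π a : ℕ) = (π d : ℕ) + 1
            omega
        -- new occurrence (d, a, c) with smaller value
        have hac : a < c := lt_trans hab hbc
        exact ihv d a c (by omega) (by exact hdlt) hac (by omega) (by omega)
      · -- Step 1: non-adjacent; consider x = a + 1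
        have hx : (a : ℕ) + 1 < n := by omega
        set x : Fin n := ⟨(a : ℕ) + 1, hx⟩ with hxdef
        have hax : a < x := by simp [Fin.lt_def, hxdef]
        have hxb : x < b := by simp [Fin.lt_def, hxdef]; omega
        have hxc : x < c := lt_trans hxb hbc
        have hxa' : x ≠ a := by intro h; rw [h] at hax; exact lt_irrefl _ hax
        have hπxb : (π x : ℕ) ≠ π b := fun h => (hxb.ne (π.injective (Fin.ext h))).elim
        have hπxc : (π x : ℕ) ≠ π c := fun h => (hxc.ne (π.injective (Fin.ext h))).elim
        have hπxa : (π x : ℕ) ≠ π a := fun h => (hxa' (π.injective (Fin.ext h))).elim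
        rcases Nat.lt_or_ge (π x : ℕ) (π c : ℕ) with h1 | h1
        · -- 3142 at (a, x, b, c)
          exact contains3142 π hax hxb hbc h1 hca hab'
        · rcases Nat.lt_or_ge (π x : ℕ) (π a : ℕ) with h2 | h2
          · -- occurrence (x, b, c) with smaller value
            exact ihv x b c (by omega) hxb hbc (by omega) (by omega)
          · rcases Nat.lt_or_ge (π x : ℕ) (π b : ℕ) with h3 | h3
            · -- occurrence (a, x, c) with gap 1 ≤ g
              exact ihg a x c (by simp [hxdef]; omega) hv hax hxc hca (by omega)
            · -- 321 at (x, b, c)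
              exact absurd (contains321 π hxb hbc (by omega) (by omega)) h321
end Helpers

lemma contains3142_of {n : ℕ} (π : Equiv.Perm (Fin n)) (hF : IsFishburn π)
    (h321 : Avoids π ![3,2,1]) (hC : Contains π ![2,3,1]) : Contains π ![3,1,4,2] := by
  obtain ⟨f, hf, hiff⟩ := hC
  have hab : f 0 < f 1 := hf (by decide)
  have hbc : f 1 < f 2 := hf (by decide)
  have h1 : (π (f 2) : ℕ) < π (f 0) := (hiff 2 0).mp (by simp)
  have h2 : (π (f 0) : ℕ) < π (f 1) := (hiff 0 1).mp (by simp)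
  exact key π hF h321 (π (f 0)) (f 0) (f 1) (f 2) le_rfl hab hbc h1 h2

lemma avoids231_of {n k : ℕ} (π : Equiv.Perm (Fin n)) (σ : Fin k → ℕ)
    (hF : IsFishburn π) (h321 : Avoids π ![3,2,1]) (hσ : Avoids π σ)
    (hsub : Contains π ![3,1,4,2] → Contains π σ) : Avoids π ![2,3,1] :=
  fun hC => hσ (hsub (contains3142_of π hF h321 hC))

theorem fishburn_eq_classical (n : ℕ) :
    ({π : Equiv.Perm (Fin n) | IsFishburn π ∧ Avoids π ![3, 2, 1] ∧ Avoids π ![1, 3, 2]} =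
      {π : Equiv.Perm (Fin n) | Avoids π ![2, 3, 1] ∧ Avoids π ![3, 2, 1] ∧ Avoids π ![1, 3, 2]}) ∧
    ({π : Equiv.Perm (Fin n) | IsFishburn π ∧ Avoids π ![3, 2, 1] ∧ Avoids π ![2, 1, 3]} =
      {π : Equiv.Perm (Fin n) | Avoids π ![2, 3, 1] ∧ Avoids π ![3, 2, 1] ∧ Avoids π ![2, 1, 3]}) ∧
    ({π : Equiv.Perm (Fin n) | IsFishburn π ∧ Avoids π ![3, 2, 1] ∧ Avoids π ![3, 1, 2]} =
      {π : Equiv.Perm (Fin n) | Avoids π ![2, 3, 1] ∧ Avoids π ![3, 2, 1] ∧ Avoids π ![3, 1, 2]}) ∧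
    ({π : Equiv.Perm (Fin n) | IsFishburn π ∧ Avoids π ![3, 2, 1] ∧ Avoids π ![3, 1, 4, 2]} =
      {π : Equiv.Perm (Fin n) | Avoids π ![2, 3, 1] ∧ Avoids π ![3, 2, 1] ∧ Avoids π ![3, 1, 4, 2]}) := by
  refine ⟨?_, ?_, ?_, ?_⟩ <;> ext π <;> simp only [Set.mem_setOf_eq] <;> constructor
  · rintro ⟨hF, h321, hσ⟩
    refine ⟨avoids231_of π _ hF h321 hσ ?_, h321, hσ⟩
    exact contains_sub π ![1,2,3] (by decide) (by decide)
  · rintro ⟨h231, h321, hσ⟩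
    exact ⟨fishburn_of_avoids231 π h231, h321, hσ⟩
  · rintro ⟨hF, h321, hσ⟩
    refine ⟨avoids231_of π _ hF h321 hσ ?_, h321, hσ⟩
    exact contains_sub π ![0,1,2] (by decide) (by decide)
  · rintro ⟨h231, h321, hσ⟩
    exact ⟨fishburn_of_avoids231 π h231, h321, hσ⟩
  · rintro ⟨hF, h321, hσ⟩
    refine ⟨avoids231_of π _ hF h321 hσ ?_, h321, hσ⟩
    exact contains_sub π ![0,1,3] (by decide) (by decide)
  · rintro ⟨h231, h321, hσ⟩
    exact ⟨fishburn_of_avoids231 π h231, h321, hσ⟩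
  · rintro ⟨hF, h321, hσ⟩
    exact ⟨avoids231_of π _ hF h321 hσ id, h321, hσ⟩
  · rintro ⟨h231, h321, hσ⟩
    exact ⟨fishburn_of_avoids231 π h231, h321, hσ⟩
end

section
/- For n ≥ 1, the number of Fishburn permutations of length n avoiding the classical pattern 321 and the classical pattern 132 equals n. -/
/-! Positions and values are `0`-based. The permutations in question are exactly those with
`π 1 < π 2 < ⋯ < π (n - 1)`. Such a permutation is determined by `π 0`: it is the inverse of
the cycle `(0 1 ⋯ π 0)`, so there are `n` of them. Each of the three forbidden patterns needs
a descent after position `0`. Conversely, an inversion `π b < π a` with `0 < a < b` puts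
`π 0` strictly between `π b` and `π a` (else `0, a, b` is a `132` or a `321`). If `π 0 < π 1`,
the value `π 0 - 1` lies right of position `1` and gives a Fishburn occurrence at `0`; if
`π 1 < π 0`, then `1 < a` and position `1` completes a `132` or a `321`. -/

open Equiv

section Patterns

variable {n : ℕ} (π : Perm (Fin n)) {a b c : Fin n}

theorem contains_132_of_lt (hab : a < b) (hbc : b < c) (hac : π a < π c) (hcb : π c < π b) :
    Contains π ![1, 3, 2] := by
  refine ⟨![a, b, c], ?_, fun i j => ?_⟩
  · exact Fin.strictMono_iff_lt_succ.2 fun i => by fin_cases i <;> assumption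
  · have hπab : π a < π b := hac.trans hcb
    fin_cases i <;> fin_cases j <;> simp <;> omega

theorem contains_321_of_lt (hab : a < b) (hbc : b < c) (hcb : π c < π b) (hba : π b < π a) :
    Contains π ![3, 2, 1] := by
  refine ⟨![a, b, c], ?_, fun i j => ?_⟩
  · exact Fin.strictMono_iff_lt_succ.2 fun i => by fin_cases i <;> assumption
  · have hπca : π c < π a := hcb.trans hba
    fin_cases i <;> fin_cases j <;> simp <;> omega

end Patterns

section Avoidance

variable {k : ℕ} {π : Perm (Fin (k + 1))}

theorem lt_of_strictMono_comp_succ {α : Type*} [Preorder α] {f : Fin (k + 1) → α}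
    (hf : StrictMono (f ∘ Fin.succ)) {a b : Fin (k + 1)} (ha : a ≠ 0) (hab : a < b) :
    f a < f b := by
  obtain ⟨a, rfl⟩ := Fin.exists_succ_eq.2 ha
  obtain ⟨b, rfl⟩ := Fin.exists_succ_eq.2 (Fin.succ_pos a |>.trans hab).ne'
  exact hf (Fin.succ_lt_succ_iff.1 hab)

theorem isFishburn_of_strictMono_comp_succ (hπ : StrictMono (π ∘ Fin.succ)) :
    IsFishburn π := by
  rintro ⟨i, j, hij, hj, hasc, hji, -⟩
  refine (lt_of_strictMono_comp_succ hπ ?_ (Fin.mk_lt_mk.2 hij)).not_gt (hji.trans hasc)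
  exact Fin.ne_of_val_ne (Nat.succ_ne_zero i)

theorem avoids_of_strictMono_comp_succ {p : Fin 3 → ℕ} (hp : p 2 < p 1)
    (hπ : StrictMono (π ∘ Fin.succ)) : Avoids π p := by
  rintro ⟨f, hf, hfp⟩
  have h01 : f 0 < f 1 := hf (by decide)
  refine (lt_of_strictMono_comp_succ hπ ?_ (hf (by decide : (1 : Fin 3) < 2))).not_gt
    ((hfp 2 1).1 hp)
  exact (Fin.zero_le _ |>.trans_lt h01).ne'

theorem IsFishburn.apply_zero_eq_zero (hF : IsFishburn π) (hk : 1 < k + 1)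
    (hasc : π 0 < π ⟨1, hk⟩) : π 0 = 0 := by
  by_contra h0
  have hpos : 0 < (π 0 : ℕ) := Fin.pos_iff_ne_zero.2 h0
  obtain ⟨j, hj⟩ : ∃ j, (π j : ℕ) + 1 = π 0 :=
    ⟨π.symm ⟨π 0 - 1, by omega⟩, by rw [apply_symm_apply]; exact Nat.sub_add_cancel hpos⟩
  have h1j : 1 < (j : ℕ) := by
    by_contra! h
    interval_cases hjv : (j : ℕ)
    · rw [show j = 0 from Fin.ext hjv] at hj
      omega
    · rw [show j = ⟨1, hk⟩ from Fin.ext hjv] at hj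
      exact (Fin.lt_def.1 hasc).not_ge (by omega)
  exact hF ⟨0, j, h1j, j.isLt, hasc, show π j < π 0 from Fin.lt_def.2 (by omega), hj.symm⟩

theorem strictMono_comp_succ_of_avoids (hF : IsFishburn π) (h321 : Avoids π ![3, 2, 1])
    (h132 : Avoids π ![1, 3, 2]) : StrictMono (π ∘ Fin.succ) := by
  intro a b hab
  by_contra! hle
  have hba : π b.succ < π a.succ :=
    hle.lt_of_ne (π.injective.ne (Fin.succ_lt_succ_iff.2 hab).ne')
  have hab' : a.succ < b.succ := Fin.succ_lt_succ_iff.2 hab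
  have h0a : 0 < a.succ := Fin.succ_pos a
  have hb0 : π b.succ < π 0 :=
    (not_lt.1 fun h => h132 (contains_132_of_lt π h0a hab' h hba)).lt_of_ne
      (π.injective.ne (h0a.trans hab').ne')
  have h0a' : π 0 < π a.succ :=
    (not_lt.1 fun h => h321 (contains_321_of_lt π h0a hab' hba h)).lt_of_ne
      (π.injective.ne h0a.ne)
  have hk : 1 < k + 1 := by have := b.isLt; omega
  set one : Fin (k + 1) := ⟨1, hk⟩
  have h01 : (0 : Fin (k + 1)) < one := Fin.mk_lt_mk.2 one_pos
  have h1le : one ≤ a.succ := Fin.mk_le_mk.2 (Nat.succ_pos a)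
  rcases lt_or_gt_of_ne (π.injective.ne h01.ne) with hasc | hdesc
  · exact (Fin.zero_le _).not_gt (hF.apply_zero_eq_zero hk hasc ▸ hb0)
  · have h1a : one < a.succ :=
      h1le.lt_of_ne fun h => (h ▸ hdesc).asymm h0a'
    rcases lt_or_gt_of_ne (π.injective.ne (h1a.trans hab').ne) with h | h
    · exact h132 (contains_132_of_lt π h1a hab' h hba)
    · exact h321 (contains_321_of_lt π h01 (h1a.trans hab') h hdesc)

end Avoidance

section Counting

variable {k : ℕ} {π : Perm (Fin (k + 1))}

theorem comp_succ_eq_succAbove (hπ : StrictMono (π ∘ Fin.succ)) :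
    π ∘ Fin.succ = (π 0).succAbove := by
  refine (hπ.range_inj (Fin.strictMono_succAbove _)).1 ?_
  rw [Set.range_comp, Fin.range_succ, Set.image_compl_eq π.bijective, Set.image_singleton,
    Fin.range_succAbove]

theorem strictMono_cycleRange_symm_comp_succ (i : Fin (k + 1)) :
    StrictMono (i.cycleRange.symm ∘ Fin.succ) := by
  intro a b hab
  simpa using Fin.strictMono_succAbove i hab

theorem strictMono_comp_succ_iff :
    StrictMono (π ∘ Fin.succ) ↔ π = (π 0).cycleRange.symm := by
  constructor
  · intro hπ
    ext1 i
    refine Fin.cases ?_ (fun j => ?_) i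
    · rw [Fin.cycleRange_symm_zero]
    · rw [Fin.cycleRange_symm_succ, ← comp_succ_eq_succAbove hπ, Function.comp_apply]
  · intro h
    rw [h]
    exact strictMono_cycleRange_symm_comp_succ _

theorem ncard_setOf_strictMono_comp_succ :
    {π : Perm (Fin (k + 1)) | StrictMono (π ∘ Fin.succ)}.ncard = k + 1 := by
  have : {π : Perm (Fin (k + 1)) | StrictMono (π ∘ Fin.succ)} =
      Set.range fun i : Fin (k + 1) => i.cycleRange.symm := by
    ext π
    refine strictMono_comp_succ_iff.trans ⟨fun h => ⟨π 0, h.symm⟩, ?_⟩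
    rintro ⟨i, rfl⟩
    rw [Fin.cycleRange_symm_zero]
  rw [this, Set.ncard_range_of_injective, Nat.card_eq_fintype_card, Fintype.card_fin]
  intro i j h
  simpa using congrArg (· 0) h

end Counting

theorem fishburn_321_132 (n : ℕ) (hn : 1 ≤ n) :
    {π : Equiv.Perm (Fin n) | IsFishburn π ∧ Avoids π ![3, 2, 1] ∧ Avoids π ![1, 3, 2]}.ncard = n := by
  obtain ⟨k, rfl⟩ := Nat.exists_eq_add_of_le' hn
  convert ncard_setOf_strictMono_comp_succ (k := k) using 2
  ext π
  exact ⟨fun ⟨hF, h321, h132⟩ => strictMono_comp_succ_of_avoids hF h321 h132,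
    fun hπ => ⟨isFishburn_of_strictMono_comp_succ hπ,
      avoids_of_strictMono_comp_succ (by decide) hπ,
      avoids_of_strictMono_comp_succ (by decide) hπ⟩⟩
end

section
/- For n ≥ 1, the number of Fishburn permutations of length n avoiding both classical patterns 321 and 213 equals n. -/
set_option maxRecDepth 10000

/-- The permutation of `Fin n` obtained by inserting the maximum value `n-1`
at position `k` into the identity. -/
def ins (n : ℕ) (k : Fin n) : Equiv.Perm (Fin n) where
  toFun a := if (a : ℕ) < (k : ℕ) then a
    else if (a : ℕ) = (k : ℕ) then ⟨n - 1, by have := k.isLt; omega⟩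
    else ⟨(a : ℕ) - 1, by have := a.isLt; omega⟩
  invFun b := if (b : ℕ) < (k : ℕ) then b
    else if h : (b : ℕ) = n - 1 then k
    else ⟨(b : ℕ) + 1, by have := b.isLt; have := k.isLt; omega⟩
  left_inv := by
    intro a
    have hk := k.isLt; have ha := a.isLt
    dsimp only
    rw [Fin.ext_iff]
    simp only [Fin.ite_val, Fin.dite_val, Fin.val_mk]
    split_ifs <;> omega
  right_inv := by
    intro b
    have hk := k.isLt; have hb := b.isLt
    dsimp only
    rw [Fin.ext_iff]
    simp only [Fin.ite_val, Fin.dite_val, Fin.val_mk]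
    split_ifs <;> omega

lemma ins_val (n : ℕ) (k : Fin n) (a : Fin n) :
    ((ins n k) a : ℕ) = if (a : ℕ) < (k : ℕ) then (a : ℕ)
      else if (a : ℕ) = (k : ℕ) then n - 1 else (a : ℕ) - 1 := by
  simp only [ins, Equiv.coe_fn_mk]
  split_ifs <;> rfl

lemma contains321_s3 {n : ℕ} (π : Equiv.Perm (Fin n)) {x y z : Fin n} (hxy : x < y) (hyz : y < z)
    (h1 : π y < π x) (h2 : π z < π y) : Contains π ![3, 2, 1] := by
  have Hxy : (x : ℕ) < y := hxy
  have Hyz : (y : ℕ) < z := hyz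
  have H1 : (π y : ℕ) < π x := h1
  have H2 : (π z : ℕ) < π y := h2
  have hv : ∀ i : Fin 3, (![3, 2, 1] : Fin 3 → ℕ) i = 3 - (i : ℕ) := by decide
  refine ⟨fun i => if (i : ℕ) = 0 then x else if (i : ℕ) = 1 then y else z, ?_, ?_⟩
  · intro a b hab
    have ha := a.isLt; have hb := b.isLt
    have hab' : (a : ℕ) < b := hab
    dsimp only
    split_ifs <;> first | omega | exact hxy | exact hyz | exact hxy.trans hyz
  · intro i j
    have hi := i.isLt; have hj := j.isLt
    rw [hv, hv]
    dsimp only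
    split_ifs <;> simp only [Fin.lt_def] <;> omega

lemma contains213 {n : ℕ} (π : Equiv.Perm (Fin n)) {x y z : Fin n} (hxy : x < y) (hyz : y < z)
    (h1 : π y < π x) (h2 : π x < π z) : Contains π ![2, 1, 3] := by
  have Hxy : (x : ℕ) < y := hxy
  have Hyz : (y : ℕ) < z := hyz
  have H1 : (π y : ℕ) < π x := h1
  have H2 : (π x : ℕ) < π z := h2
  have hv : ∀ i : Fin 3, (![2, 1, 3] : Fin 3 → ℕ) i =
      if (i : ℕ) = 0 then 2 else if (i : ℕ) = 1 then 1 else 3 := by decide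
  refine ⟨fun i => if (i : ℕ) = 0 then x else if (i : ℕ) = 1 then y else z, ?_, ?_⟩
  · intro a b hab
    have ha := a.isLt; have hb := b.isLt
    have hab' : (a : ℕ) < b := hab
    dsimp only
    split_ifs <;> first | omega | exact hxy | exact hyz | exact hxy.trans hyz
  · intro i j
    have hi := i.isLt; have hj := j.isLt
    rw [hv, hv]
    dsimp only
    split_ifs <;> simp only [Fin.lt_def] <;> omega

/-- In a `{321, 213}`-avoiding permutation, the top of any descent is the maximum. -/
lemma descent_max {n : ℕ} (π : Equiv.Perm (Fin n))
    (h321 : Avoids π ![3, 2, 1]) (h213 : Avoids π ![2, 1, 3])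
    {a b : Fin n} (hab : (b : ℕ) = (a : ℕ) + 1) (hd : π b < π a) : (π a : ℕ) = n - 1 := by
  by_contra hne
  have ha := a.isLt; have hb := b.isLt
  have hpa := (π a).isLt
  set M : Fin n := ⟨n - 1, by omega⟩ with hM
  have hmM : π (π.symm M) = M := π.apply_symm_apply M
  set m := π.symm M with hm
  have hπa : (π a : ℕ) < n - 1 := by omega
  have hπb : (π b : ℕ) < (π a : ℕ) := hd
  have hma : m ≠ a := by
    intro h
    rw [h] at hmM
    exact hne (by rw [hmM])
  have hmb : m ≠ b := by
    intro h
    rw [h] at hmM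
    have : (π b : ℕ) = n - 1 := by rw [hmM]
    omega
  have haM : π a < π m := by
    rw [hmM]
    exact Fin.mk_lt_mk.mpr hπa |>.trans_eq rfl
  rcases lt_trichotomy ((m : ℕ)) ((a : ℕ)) with h | h | h
  · exact h321 (contains321_s3 π (show m < a from h) (show a < b by exact Fin.mk_lt_mk.mpr (by omega) |>.trans_eq rfl) haM hd)
  · exact hma (Fin.ext h)
  · have hbm : b < m := by
      have : (m : ℕ) ≠ (b : ℕ) := fun hc => hmb (Fin.ext hc.symm).symm
      show (b : ℕ) < (m : ℕ)
      omega
    exact h213 (contains213 π (show a < b from by show (a : ℕ) < b; omega) hbm hd haM)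

lemma ins_mem (n : ℕ) (k : Fin n) :
    IsFishburn (ins n k) ∧ Avoids (ins n k) ![3, 2, 1] ∧ Avoids (ins n k) ![2, 1, 3] := by
  have hk := k.isLt
  refine ⟨?_, ?_, ?_⟩
  · rintro ⟨i, j, hij, hj, h1, h2, h3⟩
    rw [Fin.lt_def] at h1 h2
    rw [ins_val, ins_val] at h1 h2
    rw [ins_val, ins_val] at h3
    simp only [Fin.val_mk] at h1 h2 h3
    split_ifs at h1 h2 h3 <;> omega
  · rintro ⟨f, hf, hp⟩
    have e21 : (ins n k) (f 2) < (ins n k) (f 1) := (hp 2 1).mp (by decide)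
    have e10 : (ins n k) (f 1) < (ins n k) (f 0) := (hp 1 0).mp (by decide)
    have hf01 : (f 0 : ℕ) < f 1 := hf (show (0 : Fin 3) < 1 by decide)
    have hf12 : (f 1 : ℕ) < f 2 := hf (show (1 : Fin 3) < 2 by decide)
    have b0 := (f 0).isLt; have b1 := (f 1).isLt; have b2 := (f 2).isLt
    rw [Fin.lt_def] at e21 e10
    rw [ins_val, ins_val] at e21
    rw [ins_val, ins_val] at e10
    split_ifs at e21 e10 <;> omega
  · rintro ⟨f, hf, hp⟩
    have e10 : (ins n k) (f 1) < (ins n k) (f 0) := (hp 1 0).mp (by decide)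
    have e02 : (ins n k) (f 0) < (ins n k) (f 2) := (hp 0 2).mp (by decide)
    have hf01 : (f 0 : ℕ) < f 1 := hf (show (0 : Fin 3) < 1 by decide)
    have hf12 : (f 1 : ℕ) < f 2 := hf (show (1 : Fin 3) < 2 by decide)
    have b0 := (f 0).isLt; have b1 := (f 1).isLt; have b2 := (f 2).isLt
    rw [Fin.lt_def] at e10 e02
    rw [ins_val, ins_val] at e10
    rw [ins_val, ins_val] at e02
    split_ifs at e10 e02 <;> omega

lemma strictMono_fin_id {k : ℕ} (f : Fin k → Fin k) (hf : StrictMono f) :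
    ∀ i, (f i : ℕ) = (i : ℕ) := by
  have lb : ∀ j : ℕ, ∀ hj : j < k, j ≤ (f ⟨j, hj⟩ : ℕ) := by
    intro j
    induction j with
    | zero => intro hj; omega
    | succ j ih =>
      intro hj
      have h1 : j < k := by omega
      have h2 := ih h1
      have h3 : (f ⟨j, h1⟩ : ℕ) < f ⟨j + 1, hj⟩ := hf (Fin.mk_lt_mk.mpr (by omega))
      omega
  have ub : ∀ d j : ℕ, ∀ hj : j < k, j + d + 1 = k → (f ⟨j, hj⟩ : ℕ) ≤ j := by
    intro d
    induction d with
    | zero =>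
      intro j hj he
      have := (f ⟨j, hj⟩).isLt
      omega
    | succ d ih =>
      intro j hj he
      have h1 : j + 1 < k := by omega
      have h2 := ih (j + 1) h1 (by omega)
      have h3 : (f ⟨j, hj⟩ : ℕ) < f ⟨j + 1, h1⟩ := hf (Fin.mk_lt_mk.mpr (by omega))
      omega
  intro i
  have hi := i.isLt
  have l := lb (i : ℕ) hi
  have u := ub (k - (i : ℕ) - 1) (i : ℕ) hi (by omega)
  have e : (⟨(i : ℕ), hi⟩ : Fin k) = i := Fin.ext rfl
  rw [e] at l u
  omega

lemma mem_eq_ins {n : ℕ} (hn : 1 ≤ n) (π : Equiv.Perm (Fin n)) (hF : IsFishburn π)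
    (h321 : Avoids π ![3, 2, 1]) (h213 : Avoids π ![2, 1, 3]) :
    π = ins n (π.symm ⟨n - 1, by omega⟩) := by
  set M : Fin n := ⟨n - 1, by omega⟩ with hMdef
  set m : Fin n := π.symm M with hmdef
  have hmM : π m = M := π.apply_symm_apply M
  have hmMv : (π m : ℕ) = n - 1 := by rw [hmM]
  have hm := m.isLt
  have htm : ∀ t : Fin n, t ≠ m → (π t : ℕ) < n - 1 := by
    intro t ht
    have h1 := (π t).isLt
    have h2 : π t ≠ M := fun hc => ht (by rw [hmdef, ← hc, Equiv.symm_apply_apply])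
    have h3 : (π t : ℕ) ≠ n - 1 := fun hc => h2 (Fin.ext hc)
    omega
  -- ascent everywhere except at position m
  have ascStep : ∀ (t : ℕ) (h1 : t < n) (h2 : t + 1 < n), t ≠ (m : ℕ) →
      (π ⟨t, h1⟩ : ℕ) < (π ⟨t + 1, h2⟩ : ℕ) := by
    intro t h1 h2 ht
    by_contra hcon
    have hne : π ⟨t + 1, h2⟩ ≠ π ⟨t, h1⟩ :=
      fun hc => by have := π.injective hc; rw [Fin.ext_iff] at this; simp at this
    have hlt : π ⟨t + 1, h2⟩ < π ⟨t, h1⟩ := by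
      rw [Fin.lt_def]
      have := Fin.val_ne_of_ne hne
      omega
    have hd := descent_max π h321 h213 (a := ⟨t, h1⟩) (b := ⟨t + 1, h2⟩) rfl hlt
    have hub := htm ⟨t, h1⟩ (fun hc => ht (by rw [Fin.ext_iff] at hc; exact hc))
    omega
  -- chains of ascents
  have chain : ∀ (d i : ℕ) (hi : i < n) (h : i + d < n),
      (∀ t, i ≤ t → t < i + d → t ≠ (m : ℕ)) →
      (π ⟨i, hi⟩ : ℕ) + d ≤ (π ⟨i + d, h⟩ : ℕ) := by
    intro d
    induction d with
    | zero => intro i hi h _; simp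
    | succ d ih =>
      intro i hi h hav
      have h1 : i + d < n := by omega
      have h2 := ih i hi h1 (fun t ht1 ht2 => hav t ht1 (by omega))
      have hx : (i + d) + 1 < n := by omega
      have h3 := ascStep (i + d) h1 hx (hav (i + d) (by omega) (by omega))
      have e : (⟨i + (d + 1), h⟩ : Fin n) = ⟨(i + d) + 1, hx⟩ := rfl
      rw [e]
      omega
  -- the crux: no inversion across the position of the maximum
  have crux : ∀ (i j : ℕ) (hi : i < n) (hj : j < n), i < (m : ℕ) → (m : ℕ) < j →
      ¬ ((π ⟨j, hj⟩ : ℕ) < (π ⟨i, hi⟩ : ℕ)) := by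
    intro i j hi hj him hmj hlt
    have hineqm : (⟨i, hi⟩ : Fin n) ≠ m := fun hc => by
      rw [Fin.ext_iff] at hc; simp at hc; omega
    have hπi : (π ⟨i, hi⟩ : ℕ) < n - 1 := htm _ hineqm
    have hπin := (π ⟨i, hi⟩).isLt
    have claim : ∀ k : ℕ, ∀ hsub : (π ⟨i, hi⟩ : ℕ) - k < n,
        ((π.symm ⟨(π ⟨i, hi⟩ : ℕ) - k, hsub⟩ : Fin n) : ℕ) ≤ (m : ℕ) := by
      intro k
      induction k with
      | zero =>
        intro hsub
        have e : (⟨(π ⟨i, hi⟩ : ℕ) - 0, hsub⟩ : Fin n) = π ⟨i, hi⟩ := Fin.ext (by simp)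
        rw [e, Equiv.symm_apply_apply]
        exact le_of_lt him
      | succ k ih =>
        intro hsub
        have hsub' : (π ⟨i, hi⟩ : ℕ) - k < n := by omega
        by_cases hk : (π ⟨i, hi⟩ : ℕ) ≤ k
        · have e : (⟨(π ⟨i, hi⟩ : ℕ) - (k + 1), hsub⟩ : Fin n)
              = ⟨(π ⟨i, hi⟩ : ℕ) - k, hsub'⟩ := Fin.ext (by simp only [Fin.val_mk]; omega)
          rw [e]
          exact ih hsub'
        · set v : ℕ := (π ⟨i, hi⟩ : ℕ) - (k + 1) with hv
          have hv1 : v + 1 = (π ⟨i, hi⟩ : ℕ) - k := by omega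
          have hvn : v + 1 < n := by omega
          have hvn' : v < n := by omega
          set p : Fin n := π.symm ⟨v + 1, hvn⟩ with hp
          have hpval : π p = ⟨v + 1, hvn⟩ := π.apply_symm_apply _
          have hpvalv : (π p : ℕ) = v + 1 := by rw [hpval]
          have hpm : (p : ℕ) ≤ (m : ℕ) := by
            have e : (⟨(π ⟨i, hi⟩ : ℕ) - k, hsub'⟩ : Fin n) = ⟨v + 1, hvn⟩ :=
              Fin.ext (by simp only [Fin.val_mk]; omega)
            have := ih hsub'
            rw [e] at this
            exact this
          have hpnem : (p : ℕ) ≠ (m : ℕ) := by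
            intro hc
            have hpm' : p = m := Fin.ext hc
            rw [hpm'] at hpvalv
            omega
          have hplt : (p : ℕ) < (m : ℕ) := by omega
          by_contra hq
          set q : Fin n := π.symm ⟨v, hvn'⟩ with hqdef
          have hqval : π q = ⟨v, hvn'⟩ := π.apply_symm_apply _
          have hqvalv : (π q : ℕ) = v := by rw [hqval]
          have hqm : (m : ℕ) < (q : ℕ) := by omega
          have hqn := q.isLt
          have hpn := p.isLt
          have hp1 : (p : ℕ) + 1 < n := by omega
          -- Fishburn violation with indices p, q
          apply hF
          refine ⟨(p : ℕ), (q : ℕ), by omega, hqn, ?_, ?_, ?_⟩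
          · show π ⟨(p : ℕ), by omega⟩ < π ⟨(p : ℕ) + 1, by omega⟩
            have e1 : (⟨(p : ℕ), by omega⟩ : Fin n) = ⟨(p : ℕ), hpn⟩ := rfl
            have e2 : (⟨(p : ℕ) + 1, by omega⟩ : Fin n) = ⟨(p : ℕ) + 1, hp1⟩ := rfl
            rw [e1, e2, Fin.lt_def]
            exact ascStep (p : ℕ) hpn hp1 hpnem
          · show π ⟨(q : ℕ), hqn⟩ < π ⟨(p : ℕ), by omega⟩
            have e1 : (⟨(p : ℕ), by omega⟩ : Fin n) = p := Fin.ext rfl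
            have e3 : (⟨(q : ℕ), hqn⟩ : Fin n) = q := Fin.ext rfl
            rw [e1, e3, Fin.lt_def]
            omega
          · show (π ⟨(p : ℕ), by omega⟩ : ℕ) = (π ⟨(q : ℕ), hqn⟩ : ℕ) + 1
            have e1 : (⟨(p : ℕ), by omega⟩ : Fin n) = p := Fin.ext rfl
            have e3 : (⟨(q : ℕ), hqn⟩ : Fin n) = q := Fin.ext rfl
            rw [e1, e3]
            omega
    -- apply the claim to the value at position j
    have hjle : (π ⟨j, hj⟩ : ℕ) ≤ (π ⟨i, hi⟩ : ℕ) := le_of_lt hlt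
    have hsub : (π ⟨i, hi⟩ : ℕ) - ((π ⟨i, hi⟩ : ℕ) - (π ⟨j, hj⟩ : ℕ)) < n := by omega
    have hcl := claim ((π ⟨i, hi⟩ : ℕ) - (π ⟨j, hj⟩ : ℕ)) hsub
    have e : (⟨(π ⟨i, hi⟩ : ℕ) - ((π ⟨i, hi⟩ : ℕ) - (π ⟨j, hj⟩ : ℕ)), hsub⟩ : Fin n)
        = π ⟨j, hj⟩ := Fin.ext (by simp only [Fin.val_mk]; omega)
    rw [e, Equiv.symm_apply_apply] at hcl
    simp only [Fin.val_mk] at hcl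
    omega
  -- monotonicity off the maximum position
  have mono : ∀ i j : Fin n, i < j → i ≠ m → j ≠ m → (π i : ℕ) < π j := by
    intro i j hij him hjm
    have hij' : (i : ℕ) < (j : ℕ) := hij
    have hi := i.isLt; have hj := j.isLt
    have him' : (i : ℕ) ≠ (m : ℕ) := fun hc => him (Fin.ext hc)
    have hjm' : (j : ℕ) ≠ (m : ℕ) := fun hc => hjm (Fin.ext hc)
    have e2 : (⟨(i : ℕ), hi⟩ : Fin n) = i := Fin.ext rfl
    have e3 : (⟨(j : ℕ), hj⟩ : Fin n) = j := Fin.ext rfl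
    rcases lt_or_ge ((m : ℕ)) ((j : ℕ)) with h | h
    · rcases lt_or_ge ((i : ℕ)) ((m : ℕ)) with h2 | h2
      · have hc := crux (i : ℕ) (j : ℕ) hi hj h2 h
        rw [e2, e3] at hc
        have hne : π i ≠ π j := fun hcc => by
          have h5 := π.injective hcc
          rw [Fin.ext_iff] at h5
          omega
        have := Fin.val_ne_of_ne hne
        omega
      · have hd : i + ((j : ℕ) - (i : ℕ)) < n := by omega
        have := chain ((j : ℕ) - (i : ℕ)) (i : ℕ) hi hd (fun t ht1 ht2 => by omega)
        have e : (⟨(i : ℕ) + ((j : ℕ) - (i : ℕ)), hd⟩ : Fin n) = j := Fin.ext (by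
          simp only [Fin.val_mk]; omega)
        rw [e, e2] at this
        omega
    · have hd : i + ((j : ℕ) - (i : ℕ)) < n := by omega
      have := chain ((j : ℕ) - (i : ℕ)) (i : ℕ) hi hd (fun t ht1 ht2 => by omega)
      have e : (⟨(i : ℕ) + ((j : ℕ) - (i : ℕ)), hd⟩ : Fin n) = j := Fin.ext (by
        simp only [Fin.val_mk]; omega)
      rw [e, e2] at this
      omega
  -- the skip function and identification with `ins`
  have hn1 : (m : ℕ) ≤ n - 1 := by omega
  have skproof : ∀ t : Fin (n - 1), (t : ℕ) + 1 < n := fun t => by have := t.isLt; omega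
  have skproof' : ∀ t : Fin (n - 1), (t : ℕ) < n := fun t => by have := t.isLt; omega
  set sk : Fin (n - 1) → Fin n := fun t =>
    if (t : ℕ) < (m : ℕ) then ⟨(t : ℕ), skproof' t⟩ else ⟨(t : ℕ) + 1, skproof t⟩
    with hsk
  have hskval : ∀ t : Fin (n - 1), (sk t : ℕ) =
      if (t : ℕ) < (m : ℕ) then (t : ℕ) else (t : ℕ) + 1 := by
    intro t
    rw [hsk]
    dsimp only
    split_ifs <;> rfl
  have hskm : ∀ t, sk t ≠ m := by
    intro t
    intro hc
    rw [Fin.ext_iff, hskval t] at hc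
    split_ifs at hc <;> omega
  set h : Fin (n - 1) → Fin (n - 1) := fun t => ⟨(π (sk t) : ℕ), htm _ (hskm t)⟩ with hh
  have hmono : StrictMono h := by
    intro t t' htt
    have htt' : (t : ℕ) < (t' : ℕ) := htt
    have hlt : sk t < sk t' := by
      rw [Fin.lt_def, hskval t, hskval t']
      split_ifs <;> omega
    show ((h t : ℕ)) < (h t' : ℕ)
    rw [hh]
    exact mono _ _ hlt (hskm t) (hskm t')
  have hval : ∀ t : Fin (n - 1), (π (sk t) : ℕ) = (t : ℕ) := fun t =>
    strictMono_fin_id h hmono t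
  -- conclude
  apply Equiv.ext
  intro a
  have ha := a.isLt
  rw [Fin.ext_iff, ins_val]
  rcases lt_trichotomy ((a : ℕ)) ((m : ℕ)) with hcase | hcase | hcase
  · have ht : (a : ℕ) < n - 1 := by omega
    have e : sk ⟨(a : ℕ), ht⟩ = a := by
      apply Fin.ext
      rw [hskval]
      simp only [Fin.val_mk]
      rw [if_pos hcase]
    have hv := hval ⟨(a : ℕ), ht⟩
    rw [e] at hv
    simp only [Fin.val_mk] at hv
    rw [if_pos hcase]
    exact hv
  · have haeq : a = m := Fin.ext hcase
    rw [haeq, hmMv]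
    rw [if_neg (by omega), if_pos rfl]
  · have ht : (a : ℕ) - 1 < n - 1 := by omega
    have e : sk ⟨(a : ℕ) - 1, ht⟩ = a := by
      apply Fin.ext
      rw [hskval]
      simp only [Fin.val_mk]
      rw [if_neg (by omega)]
      omega
    have hv := hval ⟨(a : ℕ) - 1, ht⟩
    rw [e] at hv
    simp only [Fin.val_mk] at hv
    rw [if_neg (by omega), if_neg (by omega)]
    exact hv

lemma ins_inj (n : ℕ) : Function.Injective (fun k : Fin n => ins n k) := by
  intro k k' hkk
  have hk := k.isLt; have hk' := k'.isLt
  have h1 := congrArg (fun e : Equiv.Perm (Fin n) => ((e k : Fin n) : ℕ)) hkk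
  simp only [ins_val] at h1
  apply Fin.ext
  split_ifs at h1 <;> omega

theorem fishburn_321_213 (n : ℕ) (hn : 1 ≤ n) :
    {π : Equiv.Perm (Fin n) | IsFishburn π ∧ Avoids π ![3, 2, 1] ∧ Avoids π ![2, 1, 3]}.ncard = n := by
  have hset : {π : Equiv.Perm (Fin n) | IsFishburn π ∧ Avoids π ![3, 2, 1] ∧ Avoids π ![2, 1, 3]}
      = Set.range (fun k : Fin n => ins n k) := by
    ext π
    simp only [Set.mem_setOf_eq, Set.mem_range]
    constructor
    · rintro ⟨hF, h321, h213⟩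
      exact ⟨_, (mem_eq_ins hn π hF h321 h213).symm⟩
    · rintro ⟨k, rfl⟩
      exact ins_mem n k
  rw [hset, ← Set.image_univ, Set.ncard_image_of_injective _ (ins_inj n), Set.ncard_univ,
    Nat.card_eq_fintype_card, Fintype.card_fin]
end

section
/- For n ≥ 1, the number of Fishburn permutations of length n avoiding both classical patterns 321 and 312 equals the n-th Fibonacci number F_n, where F_0 = F_1 = 1 and F_n = F_{n-1} + F_{n-2}. -/
/-!
Avoiding 321 and 312 means that no entry has two smaller entries to its right; since `π i` has
`π i` smaller entries and at most `i` of them lie to its left, this forces `π i ≤ i + 1`. If some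
value `v = π i` sat two or more places too late, some entry `≥ v + 2` would precede it, so `v + 1`
must come before `v`, and the Fishburn condition puts it immediately before `v`; then that larger
entry has the two smaller entries `v + 1, v` to its right. Hence the permutations in question are
exactly those moving every point by at most one, i.e. direct sums of blocks `1` and `21`, which are
counted by the Fibonacci recurrence.
-/

open Equiv Finset

namespace Equiv.Perm

variable {n : ℕ}

def consFix (σ : Perm (Fin n)) : Perm (Fin (n + 1)) := decomposeFin.symm (0, σ)

def consSwap (ρ : Perm (Fin n)) : Perm (Fin (n + 2)) := decomposeFin.symm (1, consFix ρ)

@[simp] lemma consFix_apply_zero (σ : Perm (Fin n)) : consFix σ 0 = 0 :=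
  decomposeFin_symm_apply_zero _ _

@[simp] lemma consFix_apply_succ (σ : Perm (Fin n)) (i : Fin n) :
    consFix σ i.succ = (σ i).succ := by
  simp [consFix]

@[simp] lemma consSwap_apply_zero (ρ : Perm (Fin n)) : consSwap ρ 0 = 1 :=
  decomposeFin_symm_apply_zero _ _

@[simp] lemma consSwap_apply_one (ρ : Perm (Fin n)) : consSwap ρ 1 = 0 := by
  simp [consSwap]

@[simp] lemma consSwap_apply_succ_succ (ρ : Perm (Fin n)) (i : Fin n) :
    consSwap ρ i.succ.succ = (ρ i).succ.succ := by
  rw [consSwap, decomposeFin_symm_apply_succ, consFix_apply_succ]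
  exact swap_apply_of_ne_of_ne (Fin.succ_ne_zero _) (by simp [Fin.ext_iff])

lemma consFix_injective : Function.Injective (consFix (n := n)) :=
  fun _ _ h ↦ congrArg Prod.snd (decomposeFin.symm.injective h)

lemma consSwap_injective : Function.Injective (consSwap (n := n)) :=
  fun _ _ h ↦ consFix_injective (congrArg Prod.snd (decomposeFin.symm.injective h))

lemma decomposeFin_symm_apply_zero_snd (π : Perm (Fin (n + 1))) :
    decomposeFin.symm (π 0, (decomposeFin π).2) = π := by
  have h := decomposeFin_symm_apply_zero (decomposeFin π).1 (decomposeFin π).2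
  rw [Prod.mk.eta, symm_apply_apply] at h
  rw [h, Prod.mk.eta, symm_apply_apply]

lemma eq_consFix_of_apply_zero {π : Perm (Fin (n + 1))} (h : π 0 = 0) :
    π = consFix (decomposeFin π).2 := by
  rw [consFix, ← h, decomposeFin_symm_apply_zero_snd]

lemma exists_eq_consSwap {π : Perm (Fin (n + 2))} (h0 : π 0 = 1) (h1 : π 1 = 0) :
    ∃ ρ, π = consSwap ρ := by
  set σ := (decomposeFin π).2
  have hπ : π = decomposeFin.symm (1, σ) := by rw [← h0, decomposeFin_symm_apply_zero_snd]
  have hσ : σ 0 = 0 := by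
    rw [hπ, decomposeFin_symm_apply_one, swap_apply_eq_iff, swap_apply_left] at h1
    exact Fin.succ_injective _ h1
  exact ⟨(decomposeFin σ).2, by rw [consSwap, ← eq_consFix_of_apply_zero hσ, hπ]⟩

end Equiv.Perm

def MovesAtMostOne {n : ℕ} (π : Perm (Fin n)) : Prop :=
  ∀ i, (π i : ℕ) ≤ i + 1 ∧ (i : ℕ) ≤ π i + 1

namespace MovesAtMostOne

variable {n : ℕ}

lemma consFix_iff {σ : Perm (Fin n)} : MovesAtMostOne (σ.consFix) ↔ MovesAtMostOne σ := by
  simp [MovesAtMostOne, Fin.forall_fin_succ]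

lemma consSwap_iff {ρ : Perm (Fin n)} : MovesAtMostOne (ρ.consSwap) ↔ MovesAtMostOne ρ := by
  simp [MovesAtMostOne, Fin.forall_fin_succ]

lemma apply_zero_and_one {π : Perm (Fin (n + 2))} (hπ : MovesAtMostOne π) :
    π 0 = 0 ∨ π 0 = 1 ∧ π 1 = 0 := by
  obtain ⟨j, hj⟩ := π.surjective 0
  have hj1 : (j : ℕ) ≤ 1 := by simpa [hj] using (hπ j).2
  have h01 : (π 0 : ℕ) ≤ 1 := (hπ 0).1
  rcases Nat.le_one_iff_eq_zero_or_eq_one.1 hj1 with hj0 | hj1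
  · obtain rfl : j = 0 := Fin.ext hj0
    exact .inl hj
  · obtain rfl : j = 1 := Fin.ext hj1
    have hne : (π 0 : ℕ) ≠ 0 := fun h ↦
      zero_ne_one (π.injective ((Fin.ext h).trans hj.symm))
    exact .inr ⟨Fin.ext (by simp only [Fin.val_one]; omega), hj⟩

lemma exists_eq_consFix_or_consSwap {π : Perm (Fin (n + 2))} (hπ : MovesAtMostOne π) :
    (∃ σ, MovesAtMostOne σ ∧ π = σ.consFix) ∨ ∃ ρ, MovesAtMostOne ρ ∧ π = ρ.consSwap := by
  rcases hπ.apply_zero_and_one with h0 | ⟨h0, h1⟩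
  · have h := Perm.eq_consFix_of_apply_zero h0
    exact .inl ⟨_, consFix_iff.1 (h ▸ hπ), h⟩
  · obtain ⟨ρ, rfl⟩ := Perm.exists_eq_consSwap h0 h1
    exact .inr ⟨ρ, consSwap_iff.1 hπ, rfl⟩

def consFixOrSwap :
    {σ : Perm (Fin (n + 1)) // MovesAtMostOne σ} ⊕ {ρ : Perm (Fin n) // MovesAtMostOne ρ} →
      {π : Perm (Fin (n + 2)) // MovesAtMostOne π} :=
  Sum.elim (fun σ ↦ ⟨σ.1.consFix, consFix_iff.2 σ.2⟩) (fun ρ ↦ ⟨ρ.1.consSwap, consSwap_iff.2 ρ.2⟩)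

lemma consFixOrSwap_bijective : Function.Bijective (consFixOrSwap (n := n)) := by
  refine ⟨?_, fun ⟨π, hπ⟩ ↦ ?_⟩
  · rintro (⟨σ, _⟩ | ⟨ρ, _⟩) (⟨σ', _⟩ | ⟨ρ', _⟩) h <;>
      simp only [consFixOrSwap, Sum.elim_inl, Sum.elim_inr, Subtype.mk.injEq] at h
    · obtain rfl := Perm.consFix_injective h; rfl
    · simpa using congrArg (· 0) h
    · simpa using congrArg (· 0) h
    · obtain rfl := Perm.consSwap_injective h; rfl
  · rcases hπ.exists_eq_consFix_or_consSwap with ⟨σ, hσ, rfl⟩ | ⟨ρ, hρ, rfl⟩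
    exacts [⟨.inl ⟨σ, hσ⟩, rfl⟩, ⟨.inr ⟨ρ, hρ⟩, rfl⟩]

lemma of_subsingleton [Subsingleton (Perm (Fin n))] (π : Perm (Fin n)) : MovesAtMostOne π := by
  intro i
  rw [Subsingleton.elim π 1]
  simp

end MovesAtMostOne

theorem card_movesAtMostOne :
    ∀ n, Nat.card {π : Perm (Fin n) // MovesAtMostOne π} = Nat.fib (n + 1)
  | 0 | 1 => by simp [MovesAtMostOne.of_subsingleton]
  | n + 2 => by
    rw [← Nat.card_congr (Equiv.ofBijective _ MovesAtMostOne.consFixOrSwap_bijective),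
      Nat.card_sum, card_movesAtMostOne (n + 1), card_movesAtMostOne n, add_comm]
    exact (Nat.fib_add_two (n := n + 1)).symm

section Patterns

variable {n : ℕ} {π : Perm (Fin n)}

lemma avoids_321_and_312_iff :
    Avoids π ![3, 2, 1] ∧ Avoids π ![3, 1, 2] ↔
      ∀ a b c, a < b → b < c → π b < π a → π a < π c := by
  constructor
  · rintro ⟨h321, h312⟩ a b c hab hbc hba
    by_contra! hca
    have hca : π c < π a := hca.lt_of_ne (π.injective.ne (hab.trans hbc).ne')
    have hmono : StrictMono ![a, b, c] :=
      Fin.strictMono_iff_lt_succ.2 (by simp [Fin.forall_fin_succ, hab, hbc])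
    rcases lt_or_gt_of_ne (π.injective.ne hbc.ne) with hbc' | hcb
    · refine h312 ⟨_, hmono, ?_⟩
      simp [Fin.forall_fin_succ, hba, hca, hbc', hba.not_gt, hca.not_gt, hbc'.not_gt]
    · refine h321 ⟨_, hmono, ?_⟩
      simp [Fin.forall_fin_succ, hba, hca, hcb, hba.not_gt, hca.not_gt, hcb.not_gt]
  · intro h
    constructor <;> rintro ⟨f, hf, hp⟩ <;>
      exact (h (f 0) (f 1) (f 2) (hf (by decide)) (hf (by decide))
        ((hp 1 0).1 (by decide))).not_gt ((hp 2 0).1 (by decide))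

lemma card_filter_apply_lt (π : Perm (Fin n)) (m : ℕ) : #{j | (π j : ℕ) < m} = min n m := by
  rw [← Fin.card_filter_val_lt]
  exact card_equiv π (by simp)

variable (hπ : ∀ a b c, a < b → b < c → π b < π a → π a < π c)
include hπ

lemma val_apply_le_add_one (i : Fin n) : (π i : ℕ) ≤ i + 1 := by
  by_contra! hi
  set S : Finset (Fin n) := {j | (π j : ℕ) < π i}
  have hS : #S = π i := (card_filter_apply_lt π _).trans (min_eq_right (π i).isLt.le)
  have hright : 1 < #(S \ Iio i) := by
    have := le_card_sdiff (Iio i) S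
    rw [Fin.card_Iio] at this
    omega
  have key : ∀ b ∈ S \ Iio i, ∀ c ∈ S \ Iio i, b < c → False := by
    intro b hb c hc hbc
    simp only [S, mem_sdiff, mem_filter, mem_univ, true_and, mem_Iio, not_lt] at hb hc
    have hib : i < b := hb.2.lt_of_ne (by rintro rfl; exact hb.1.false)
    exact (hπ i b c hib hbc hb.1).not_gt hc.1
  obtain ⟨b, hb, c, hc, hbc⟩ := one_lt_card.1 hright
  rcases hbc.lt_or_gt with hbc | hcb
  exacts [key b hb c hc hbc, key c hc b hb hcb]

lemma IsFishburn.val_add_one_eq_of_apply_eq_add_one (hF : IsFishburn π) {q i : Fin n}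
    (hqi : q < i) (hv : (π q : ℕ) = π i + 1) : (q : ℕ) + 1 = i := by
  by_contra hne
  have hlt : (q : ℕ) + 1 < i := by rw [Fin.lt_def] at hqi; omega
  set r : Fin n := ⟨q + 1, by omega⟩
  have hqr : q < r := by simp [r, Fin.lt_def]
  have hri : r < i := by simpa [r, Fin.lt_def]
  rcases (π.injective.ne hqr.ne').lt_or_gt with hrq | hqr
  · have := hπ q r i hqr hri hrq
    rw [Fin.lt_def] at this
    omega
  · refine hF ⟨q, i, hlt, i.isLt, ?_, ?_, ?_⟩
    · simpa using hqr
    · simp [Fin.lt_def, hv]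
    · simpa using hv

lemma val_le_apply_add_one (hF : IsFishburn π) (i : Fin n) : (i : ℕ) ≤ π i + 1 := by
  by_contra! hi
  set v : ℕ := (π i : ℕ)
  have hv : v + 2 ≤ n := by have := i.isLt; omega
  obtain ⟨a, hai, hva⟩ : ∃ a ∈ Iic i, a ∉ ({j | (π j : ℕ) < v + 2} : Finset (Fin n)) := by
    refine exists_mem_notMem_of_card_lt_card ?_
    rw [card_filter_apply_lt, Fin.card_Iic]
    omega
  simp only [mem_Iic, mem_filter, mem_univ, true_and, not_lt] at hai hva
  have hai : a < i := hai.lt_of_ne (by rintro rfl; omega)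
  obtain ⟨q, hq⟩ : ∃ q : Fin n, (π q : ℕ) = v + 1 := ⟨π.symm ⟨v + 1, by omega⟩, by simp⟩
  have hqi : q ≠ i := by rintro rfl; omega
  rcases hqi.lt_or_gt with hqi | hiq
  · have hqi' := IsFishburn.val_add_one_eq_of_apply_eq_add_one hπ hF hqi hq
    have haq : a ≠ q := by rintro rfl; omega
    have := hπ a q i (Fin.lt_def.2 (by have := Fin.val_injective.ne haq; omega)) hqi
      (Fin.lt_def.2 (by omega))
    rw [Fin.lt_def] at this
    omega
  · have := hπ a i q hai hiq (Fin.lt_def.2 (by omega))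
    rw [Fin.lt_def] at this
    omega

end Patterns

namespace MovesAtMostOne

variable {n : ℕ} {π : Perm (Fin n)}

lemma apply_lt_apply (h : MovesAtMostOne π) {a c : Fin n} (hac : (a : ℕ) + 1 < c) :
    π a < π c := by
  have hne : (π a : ℕ) ≠ π c := Fin.val_injective.ne (π.injective.ne (by omega))
  have := (h a).1
  have := (h c).2
  exact Fin.lt_def.2 (by omega)

lemma isFishburn (h : MovesAtMostOne π) : IsFishburn π :=
  fun ⟨_, _, hij, _, _, hji, _⟩ ↦ (h.apply_lt_apply hij).not_gt hji

end MovesAtMostOne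

theorem isFishburn_and_avoids_321_312_iff {n : ℕ} {π : Perm (Fin n)} :
    IsFishburn π ∧ Avoids π ![3, 2, 1] ∧ Avoids π ![3, 1, 2] ↔ MovesAtMostOne π := by
  rw [avoids_321_and_312_iff]
  refine ⟨fun ⟨hF, hπ⟩ i ↦ ⟨val_apply_le_add_one hπ i, val_le_apply_add_one hπ hF i⟩,
    fun h ↦ ⟨h.isFishburn, fun a b c hab hbc _ ↦ h.apply_lt_apply ?_⟩⟩
  rw [Fin.lt_def] at hab hbc
  omega

theorem fishburn_321_312_general (n : ℕ) :
    {π : Equiv.Perm (Fin n) | IsFishburn π ∧ Avoids π ![3, 2, 1] ∧ Avoids π ![3, 1, 2]}.ncard = Nat.fib (n + 1) := by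
  simp_rw [isFishburn_and_avoids_321_312_iff]
  rw [← Nat.card_coe_set_eq]
  exact card_movesAtMostOne n

theorem fishburn_321_312 (n : ℕ) (hn : 1 ≤ n) :
    {π : Equiv.Perm (Fin n) | IsFishburn π ∧ Avoids π ![3, 2, 1] ∧ Avoids π ![3, 1, 2]}.ncard = Nat.fib (n + 1) :=
  fishburn_321_312_general n
end

section
/- For n ≥ 1, the number of Fishburn permutations of length n avoiding both classical patterns 321 and 3142 equals 2^{n-1}. -/
open Equiv Finset

section Hessenberg

variable {n : ℕ}

/-- The permutation matrix `[τ i = j]` is lower Hessenberg: it vanishes for `j > i + 1`. -/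
def IsHessenberg (τ : Perm (Fin n)) : Prop := ∀ i, (τ i : ℕ) ≤ i + 1

lemma swap_zero_apply_succ_le_iff {p : Fin (n + 1)} (hp : (p : ℕ) < 2) (y : Fin n) (k : ℕ) :
    (swap 0 p y.succ : ℕ) ≤ k + 2 ↔ (y : ℕ) ≤ k + 1 := by
  rcases eq_or_ne y.succ p with h | h
  · rw [h, swap_apply_right]
    rw [Fin.ext_iff, Fin.val_succ] at h
    simp only [Fin.val_zero]
    omega
  · rw [swap_apply_of_ne_of_ne (Fin.succ_ne_zero y) h, Fin.val_succ]
    omega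

lemma isHessenberg_decomposeFin_symm_iff (p : Fin (n + 1)) (σ : Perm (Fin n)) :
    IsHessenberg (Perm.decomposeFin.symm (p, σ)) ↔ (p : ℕ) < 2 ∧ IsHessenberg σ := by
  simp only [IsHessenberg, Fin.forall_fin_succ, Perm.decomposeFin_symm_apply_zero,
    Perm.decomposeFin_symm_apply_succ, Fin.val_zero, Fin.val_succ]
  constructor <;> rintro ⟨hp, hσ⟩
  · exact ⟨by omega, fun i => (swap_zero_apply_succ_le_iff (by omega) _ _).1 (hσ i)⟩
  · exact ⟨by omega, fun i => (swap_zero_apply_succ_le_iff hp _ _).2 (hσ i)⟩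

theorem card_isHessenberg (n : ℕ) :
    Nat.card {τ : Perm (Fin n) // IsHessenberg τ} = 2 ^ (n - 1) := by
  induction n with
  | zero => simp [IsHessenberg]
  | succ n ih =>
    let e : {τ : Perm (Fin (n + 1)) // IsHessenberg τ} ≃
        {p : Fin (n + 1) // (p : ℕ) < 2} × {σ : Perm (Fin n) // IsHessenberg σ} :=
      (Perm.decomposeFin.symm.subtypeEquiv fun x =>
        (isHessenberg_decomposeFin_symm_iff x.1 x.2).symm).symm.trans
        (subtypeProdEquivProd (p := fun p : Fin (n + 1) => (p : ℕ) < 2) (q := IsHessenberg))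
    rw [Nat.card_congr e, Nat.card_prod, ih, Nat.card_eq_fintype_card, Fintype.card_subtype,
      Fin.card_filter_val_lt]
    rcases n with _ | n <;> simp [pow_succ']

end Hessenberg

section Patterns

variable {n : ℕ} {π : Perm (Fin n)}

lemma contains_321_iff :
    Contains π ![3, 2, 1] ↔ ∃ a b c, a < b ∧ b < c ∧ π c < π b ∧ π b < π a := by
  constructor
  · rintro ⟨f, hf, h⟩
    exact ⟨f 0, f 1, f 2, hf (by decide), hf (by decide), (h 2 1).1 (by decide),
      (h 1 0).1 (by decide)⟩
  · rintro ⟨a, b, c, hab, hbc, h₁, h₂⟩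
    refine ⟨![a, b, c], Fin.strictMono_iff_lt_succ.2 fun i => ?_, fun i j => ?_⟩
    · fin_cases i <;> simpa
    · fin_cases i <;> fin_cases j <;> simp <;> omega

lemma contains_3142_iff :
    Contains π ![3, 1, 4, 2] ↔
      ∃ a b c d, a < b ∧ b < c ∧ c < d ∧ π b < π d ∧ π d < π a ∧ π a < π c := by
  constructor
  · rintro ⟨f, hf, h⟩
    exact ⟨f 0, f 1, f 2, f 3, hf (by decide), hf (by decide), hf (by decide),
      (h 1 3).1 (by decide), (h 3 0).1 (by decide), (h 0 2).1 (by decide)⟩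
  · rintro ⟨a, b, c, d, hab, hbc, hcd, h₁, h₂, h₃⟩
    refine ⟨![a, b, c, d], Fin.strictMono_iff_lt_succ.2 fun i => ?_, fun i j => ?_⟩
    · fin_cases i <;> simpa
    · fin_cases i <;> fin_cases j <;> simp <;> omega

lemma isHessenberg_inv_iff : IsHessenberg π⁻¹ ↔ ∀ i : Fin n, (i : ℕ) ≤ π i + 1 :=
  ⟨fun h i => by simpa using h (π i), fun h v => by simpa using h (π⁻¹ v)⟩

lemma IsHessenberg.apply_lt_of_lt_of_le (h : IsHessenberg π⁻¹) {i i' j : Fin n} (hii' : i < i')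
    (hi'j : i' ≤ j) (hj : j ≤ π i) : π i' < j := by
  by_contra! hi'
  -- the `j` values below `j` would fill the `j - 1` positions `≤ j` other than `i` and `i'`
  have hcard : (Iio j).card ≤ (((Iic j).erase i).erase i').card := by
    refine card_le_card_of_injOn (fun w => π⁻¹ w) (fun w hw => ?_) π⁻¹.injective.injOn
    simp only [coe_Iio, Set.mem_Iio, coe_erase, coe_Iic, Set.mem_sdiff, Set.mem_Iic,
      Set.mem_singleton_iff] at hw ⊢
    have hw' := h w
    refine ⟨⟨by omega, fun hwi => ?_⟩, fun hwi' => ?_⟩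
    · rw [Perm.inv_eq_iff_eq] at hwi; omega
    · rw [Perm.inv_eq_iff_eq] at hwi'; omega
  rw [card_erase_of_mem (by simp [hii'.ne', hi'j]), card_erase_of_mem (by simp; omega),
    Fin.card_Iio, Fin.card_Iic] at hcard
  omega

lemma IsHessenberg.apply_add_one_eq (h : IsHessenberg π⁻¹) {i j : Fin n} (hij : i < j)
    (hπ : π j < π i) : (π j : ℕ) + 1 = j := by
  have hlt : π j < j := by
    by_contra! hj
    exact (h.apply_lt_of_lt_of_le hij le_rfl (hj.trans hπ.le)).not_ge hj
  have := isHessenberg_inv_iff.1 h j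
  omega

lemma IsHessenberg.avoids_321 (h : IsHessenberg π⁻¹) : Avoids π ![3, 2, 1] := by
  intro hπ
  obtain ⟨a, b, c, hab, hbc, h₁, h₂⟩ := contains_321_iff.1 hπ
  have := h.apply_add_one_eq hab h₂
  have := h.apply_add_one_eq hbc h₁
  omega

lemma IsHessenberg.avoids_3142 (h : IsHessenberg π⁻¹) : Avoids π ![3, 1, 4, 2] := by
  intro hπ
  obtain ⟨a, b, c, d, hab, hbc, hcd, -, h₂, h₃⟩ := contains_3142_iff.1 hπ
  have hd := h.apply_add_one_eq (hab.trans (hbc.trans hcd)) h₂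
  have := h.apply_lt_of_lt_of_le (hab.trans hbc) hcd.le (by omega)
  omega

lemma IsHessenberg.isFishburn (h : IsHessenberg π⁻¹) : IsFishburn π := by
  rintro ⟨i, j, hij, hj, h₁, h₂, h₃⟩
  have := h.apply_add_one_eq (Fin.mk_lt_mk.2 (by omega)) h₂
  have := h.apply_lt_of_lt_of_le (i' := ⟨i + 1, by omega⟩) (Fin.mk_lt_mk.2 i.lt_succ_self)
    (Fin.mk_le_mk.2 hij.le) (by omega)
  omega

lemma exists_lt_ne_apply_gt {i q : Fin n} (hqi : q < i) (hi : (π i : ℕ) + 1 < i)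
    (hq : (π q : ℕ) = π i + 1) : ∃ p < i, p ≠ q ∧ π q < π p := by
  by_contra! hsmall
  have hcard : ((Iio i).erase q).card ≤ (Iio (π i)).card := by
    refine card_le_card_of_injOn π (fun p hp => ?_) π.injective.injOn
    simp only [coe_erase, coe_Iio, Set.mem_sdiff, Set.mem_Iio, Set.mem_singleton_iff] at hp ⊢
    have h₁ := hsmall p hp.1 hp.2
    have h₂ : π p ≠ π q := π.injective.ne hp.2
    have h₃ : π p ≠ π i := π.injective.ne hp.1.ne
    omega
  rw [card_erase_of_mem (mem_Iio.2 hqi), Fin.card_Iio, Fin.card_Iio] at hcard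
  omega

lemma not_isFishburn_of_apply_add_one_lt (h321 : Avoids π ![3, 2, 1])
    (h3142 : Avoids π ![3, 1, 4, 2]) {i q : Fin n} (hqi : q < i) (hi : (π i : ℕ) + 1 < i)
    (hq : (π q : ℕ) = π i + 1) : ¬ IsFishburn π := by
  obtain ⟨p, hpi, hpq, hp⟩ := exists_lt_ne_apply_gt hqi hi hq
  rcases hpq.lt_or_gt with hpq | hqp
  · exact (h321 (contains_321_iff.2 ⟨p, q, i, hpq, hqi, by omega, hp⟩)).elim
  let r : Fin n := ⟨q + 1, by omega⟩
  have hrq : π r ≠ π q := π.injective.ne (by simp [r, Fin.ext_iff])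
  rcases hrq.lt_or_gt with hrq | hrq
  · have hri : π r ≠ π i := π.injective.ne (by simp [r, Fin.ext_iff]; omega)
    have hrp : r < p := by
      have : r ≠ p := fun h => by rw [h] at hrq; omega
      simp only [r, Fin.lt_def, ne_eq, Fin.ext_iff] at this ⊢
      omega
    exact (h3142 (contains_3142_iff.2 ⟨q, r, p, i, by simp [r, Fin.lt_def], hrp, hpi,
      by omega, by omega, hp⟩)).elim
  · exact fun hF => hF ⟨q, i, by omega, i.isLt, hrq, (by omega : π i < π q), hq⟩

lemma isHessenberg_inv_of_isFishburn (hF : IsFishburn π) (h321 : Avoids π ![3, 2, 1])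
    (h3142 : Avoids π ![3, 1, 4, 2]) : IsHessenberg π⁻¹ := by
  rw [isHessenberg_inv_iff]
  by_contra! hπ
  obtain ⟨i, hi, hmax⟩ :=
    (univ.filter fun i : Fin n => (π i : ℕ) + 1 < i).exists_max_image π
      (by simpa [filter_nonempty_iff] using hπ)
  simp only [mem_filter, mem_univ, true_and] at hi hmax
  let q := π⁻¹ ⟨π i + 1, by omega⟩
  have hπq : (π q : ℕ) = π i + 1 := by simp [q]
  have hqi : q < i := by
    rcases lt_trichotomy q i with h | h | h
    · exact h
    · rw [h] at hπq; omega
    · have := hmax q (by omega)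
      omega
  exact not_isFishburn_of_apply_add_one_lt h321 h3142 hqi hi hπq hF

theorem isFishburn_and_avoids_iff_isHessenberg_inv :
    IsFishburn π ∧ Avoids π ![3, 2, 1] ∧ Avoids π ![3, 1, 4, 2] ↔ IsHessenberg π⁻¹ :=
  ⟨fun ⟨hF, h321, h3142⟩ => isHessenberg_inv_of_isFishburn hF h321 h3142,
    fun h => ⟨h.isFishburn, h.avoids_321, h.avoids_3142⟩⟩

end Patterns

theorem fishburn_321_3142_general (n : ℕ) :
    {π : Equiv.Perm (Fin n) | IsFishburn π ∧ Avoids π ![3, 2, 1] ∧ Avoids π ![3, 1, 4, 2]}.ncard = 2 ^ (n - 1) := by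
  simp_rw [isFishburn_and_avoids_iff_isHessenberg_inv, ← Nat.card_coe_set_eq,
    ← card_isHessenberg n]
  exact Nat.card_congr ((Equiv.inv _).subtypeEquiv fun _ => Iff.rfl)

theorem fishburn_321_3142 (n : ℕ) (hn : 1 ≤ n) :
    {π : Equiv.Perm (Fin n) | IsFishburn π ∧ Avoids π ![3, 2, 1] ∧ Avoids π ![3, 1, 4, 2]}.ncard = 2 ^ (n - 1) :=
  fishburn_321_3142_general n
end

section
/- For n ≥ 2, the number of Fishburn permutations of length n avoiding both classical patterns 321 and 2134 equals n² − 3n + 4. -/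
/-!
A 321-avoiding permutation is determined by its excedances (positions `j` with `j < π j`) and
their values, because the excedance values and the remaining values both appear in increasing
order. Let `π` be a Fishburn permutation avoiding 321 and 2134 with first excedance `i`. The
Fishburn condition forces `π (i + 1) < π i`, so 2134-avoidance forbids any rise above `π i` after
position `i + 1`. Hence `π` is the identity, or has a single excedance, at `i` with value `n - 1`
or `n - 2`, or has exactly two, at `i₁ + 2 ≤ i₂` with values `v₁ ∈ {n - 3, n - 2}` and `n - 1`. All
of these qualify, and there are `1 + (n - 1) + (n - 2) + (n - 2) (n - 3) = n² - 3n + 4` of them.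
-/

theorem contains_of_strictMono {n k : ℕ} {π : Equiv.Perm (Fin n)} {p : Fin k → ℕ}
    (hp : Function.Injective p) (f : Fin k → Fin n) (hf : StrictMono f)
    (h : ∀ i j, p i < p j → π (f i) < π (f j)) : Contains π p := by
  refine ⟨f, hf, fun i j => ⟨h i j, fun hij => ?_⟩⟩
  rcases lt_trichotomy (p i) (p j) with hlt | heq | hgt
  · exact hlt
  · rw [hp heq] at hij; exact absurd hij (lt_irrefl _)
  · exact absurd (h j i hgt) hij.asymm

theorem avoids_321_iff {n : ℕ} (π : Equiv.Perm (Fin n)) :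
    Avoids π ![3, 2, 1] ↔ ∀ a b c, a < b → b < c → ¬(π c < π b ∧ π b < π a) := by
  refine ⟨fun hA a b c hab hbc ⟨hcb, hba⟩ => hA ?_, fun h ⟨f, hf, hp⟩ => ?_⟩
  · refine contains_of_strictMono (by decide) ![a, b, c] ?_ ?_
    · exact Fin.strictMono_iff_lt_succ.2 (by simp [Fin.forall_fin_two, hab, hbc])
    · intro i j; fin_cases i <;> fin_cases j <;> simp <;> order
  · exact h (f 0) (f 1) (f 2) (hf (by decide)) (hf (by decide))
      ⟨(hp 2 1).1 (by decide), (hp 1 0).1 (by decide)⟩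

theorem avoids_2134_iff {n : ℕ} (π : Equiv.Perm (Fin n)) :
    Avoids π ![2, 1, 3, 4] ↔
      ∀ a b c d, a < b → b < c → c < d → ¬(π b < π a ∧ π a < π c ∧ π c < π d) := by
  refine ⟨fun hA a b c d hab hbc hcd ⟨hba, hac, hcd'⟩ => hA ?_, fun h ⟨f, hf, hp⟩ => ?_⟩
  · refine contains_of_strictMono (by decide) ![a, b, c, d] ?_ ?_
    · exact Fin.strictMono_iff_lt_succ.2 (by simp [Fin.forall_fin_succ, hab, hbc, hcd])
    · intro i j; fin_cases i <;> fin_cases j <;> simp <;> order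
  · exact h (f 0) (f 1) (f 2) (f 3) (hf (by decide)) (hf (by decide)) (hf (by decide))
      ⟨(hp 1 0).1 (by decide), (hp 0 2).1 (by decide), (hp 2 3).1 (by decide)⟩

theorem isFishburn_iff {n : ℕ} (π : Equiv.Perm (Fin n)) :
    IsFishburn π ↔ ∀ a a' b : Fin n, (a' : ℕ) = a + 1 → (a : ℕ) + 1 < b →
      ¬(π a < π a' ∧ π b < π a ∧ (π a : ℕ) = π b + 1) := by
  constructor
  · rintro hf a a' b ha' hab ⟨h1, h2, h3⟩
    obtain ⟨a', _⟩ := a'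
    obtain rfl : a' = a + 1 := ha'
    exact hf ⟨a, b, hab, b.isLt, h1, h2, h3⟩
  · rintro h ⟨i, j, hij, hj, h1, h2, h3⟩
    exact h ⟨i, by omega⟩ ⟨i + 1, by omega⟩ ⟨j, hj⟩ rfl hij ⟨h1, h2, h3⟩

section Avoids321

variable {n : ℕ} {π σ : Equiv.Perm (Fin n)}

theorem apply_lt_apply_of_nonexcedance (h : Avoids π ![3, 2, 1]) {a b : Fin n} (hab : a < b)
    (ha : π a ≤ a) (hb : π b ≤ b) : π a < π b := by
  by_contra! hba
  have hba : π b < π a := lt_of_le_of_ne hba (π.injective.ne hab.ne')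
  by_cases hm : ∃ m < a, π a < π m
  · obtain ⟨m, hma, hm⟩ := hm
    exact (avoids_321_iff π).1 h m a b hma hab ⟨hba, hm⟩
  push Not at hm
  have hmaps : Set.MapsTo π (Finset.Iic a) ((Finset.Iic (π a)).erase (π b)) := by
    intro m hm'
    simp only [Finset.coe_Iic, Set.mem_Iic, Finset.coe_erase, Set.mem_sdiff,
      Set.mem_singleton_iff] at hm' ⊢
    refine ⟨(lt_or_eq_of_le hm').elim (hm m) (fun h => h ▸ le_rfl), ?_⟩
    exact π.injective.ne (by rintro rfl; exact absurd hab (not_lt.2 hm'))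
  have := Finset.card_le_card_of_injOn π hmaps π.injective.injOn
  rw [Fin.card_Iic, Finset.card_erase_of_mem (Finset.mem_Iic.2 hba.le), Fin.card_Iic] at this
  omega

theorem apply_lt_apply_of_excedance (h : Avoids π ![3, 2, 1]) {a b : Fin n} (hab : a < b)
    (ha : a < π a) (hb : b < π b) : π a < π b := by
  by_contra! hba
  have hba : π b < π a := lt_of_le_of_ne hba (π.injective.ne hab.ne')
  by_cases hm : ∃ m, b < m ∧ π m < π b
  · obtain ⟨m, hbm, hm⟩ := hm
    exact (avoids_321_iff π).1 h a b m hab hbm ⟨hm, hba⟩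
  push Not at hm
  have hmaps : Set.MapsTo π (Finset.Ici b) ((Finset.Ici (π b)).erase (π a)) := by
    intro m hm'
    simp only [Finset.coe_Ici, Set.mem_Ici, Finset.coe_erase, Set.mem_sdiff,
      Set.mem_singleton_iff] at hm' ⊢
    refine ⟨(lt_or_eq_of_le hm').elim (hm m) (fun h => h ▸ le_rfl), ?_⟩
    exact π.injective.ne (by rintro rfl; exact absurd hab (not_lt.2 hm'))
  have := Finset.card_le_card_of_injOn π hmaps π.injective.injOn
  rw [Fin.card_Ici, Finset.card_erase_of_mem (Finset.mem_Ici.2 hba.le), Fin.card_Ici] at this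
  omega

theorem not_apply_lt_of_agree_below (hπ : Avoids π ![3, 2, 1]) {j : Fin n}
    (hbelow : ∀ m < j, π m = σ m) (hj : π j ≤ j) : ¬ σ j < π j := by
  intro hlt
  obtain ⟨m, hm⟩ := π.surjective (σ j)
  rcases lt_trichotomy m j with hmj | rfl | hjm
  · exact hmj.ne (σ.injective ((hbelow m hmj).symm.trans hm))
  · exact hlt.ne hm.symm
  · have := apply_lt_apply_of_nonexcedance hπ hjm hj (hm ▸ (hlt.trans_le hj).le.trans hjm.le)
    exact (hm ▸ this).not_gt hlt

theorem eq_of_avoids_321_of_excedances (hπ : Avoids π ![3, 2, 1]) (hσ : Avoids σ ![3, 2, 1])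
    (hexc : ∀ j, j < π j ↔ j < σ j) (hval : ∀ j, j < π j → π j = σ j) : π = σ := by
  ext j : 1
  induction j using WellFoundedLT.induction with
  | _ j ih =>
    by_cases hj : j < π j
    · exact hval j hj
    have hj' : ¬ j < σ j := (hexc j).not.1 hj
    refine le_antisymm (not_lt.1 fun hlt => ?_) (not_lt.1 fun hlt => ?_)
    · exact not_apply_lt_of_agree_below hπ ih (not_lt.1 hj) hlt
    · exact not_apply_lt_of_agree_below hσ (fun m hm => (ih m hm).symm) (not_lt.1 hj') hlt

end Avoids321

open Fin.NatCast in
/-- For `i ≤ v < n`, the one-line notation of `insertAt n i v` is that of the identity with the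
entry `v` moved left to position `i`. -/
def insertAt (n i v : ℕ) [NeZero n] : Equiv.Perm (Fin n) := (Fin.cycleIcc (i : Fin n) v)⁻¹

/-- For `i₁ + 2 ≤ i₂ ≤ n - 2` and `n - 3 ≤ v₁ ≤ n - 2`: the entries `v₁` at position `i₁` and
`n - 1` at position `i₂`, all other entries in increasing order. -/
def insertAt₂ (n i₁ v₁ i₂ : ℕ) [NeZero n] : Equiv.Perm (Fin n) :=
  insertAt n i₁ v₁ * insertAt n i₂ (n - 1)

section insertAt

variable {n : ℕ} [NeZero n]

open Fin.NatCast in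
theorem val_insertAt {i v : ℕ} (hiv : i ≤ v) (hv : v < n) (k : Fin n) :
    ((k : ℕ) = i ∧ (insertAt n i v k : ℕ) = v) ∨
      (i < (k : ℕ) ∧ (k : ℕ) ≤ v ∧ (insertAt n i v k : ℕ) = k - 1) ∨
      (((k : ℕ) < i ∨ v < (k : ℕ)) ∧ (insertAt n i v k : ℕ) = k) := by
  obtain ⟨m, rfl⟩ := (Fin.cycleIcc (i : Fin n) v).surjective k
  have hi : ((i : Fin n) : ℕ) = i := Fin.val_cast_of_lt (by omega)
  have hv' : ((v : Fin n) : ℕ) = v := Fin.val_cast_of_lt hv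
  simp only [insertAt, Equiv.Perm.coe_inv, Equiv.symm_apply_apply]
  rcases lt_or_ge (m : ℕ) i with hmi | hmi
  · rw [Fin.cycleIcc_of_lt (Fin.lt_def.2 (by omega))]; omega
  rcases lt_or_ge v m with hmv | hmv
  · rw [Fin.cycleIcc_of_gt (Fin.lt_def.2 (by omega))]; omega
  rw [Fin.cycleIcc_of_le_of_le (Fin.le_def.2 (by omega)) (Fin.le_def.2 (by omega))]
  split_ifs with h
  · subst h; omega
  · have : (m : ℕ) ≠ v := fun h' => h (Fin.ext (by omega))
    rw [Fin.val_add_one_of_lt' (by omega)]; omega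

theorem val_insertAt₂ {i₁ v₁ i₂ : ℕ} (h₁₂ : i₁ + 2 ≤ i₂) (h₂ : i₂ + 2 ≤ n)
    (hv₁ : n ≤ v₁ + 3) (hv₁' : v₁ + 2 ≤ n) (k : Fin n) :
    ((k : ℕ) = i₁ ∧ (insertAt₂ n i₁ v₁ i₂ k : ℕ) = v₁) ∨
      ((k : ℕ) = i₂ ∧ (insertAt₂ n i₁ v₁ i₂ k : ℕ) = n - 1) ∨
      ((k : ℕ) < i₁ ∧ (insertAt₂ n i₁ v₁ i₂ k : ℕ) = k) ∨
      (i₁ < (k : ℕ) ∧ (k : ℕ) < i₂ ∧ (insertAt₂ n i₁ v₁ i₂ k : ℕ) = k - 1) ∨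
      (i₂ < (k : ℕ) ∧ (k : ℕ) ≤ v₁ + 1 ∧ (insertAt₂ n i₁ v₁ i₂ k : ℕ) = k - 2) ∨
      (v₁ + 1 < (k : ℕ) ∧ (insertAt₂ n i₁ v₁ i₂ k : ℕ) = k - 1) := by
  have h₂k := val_insertAt (n := n) (i := i₂) (v := n - 1) (by omega) (by omega) k
  have h₁k := val_insertAt (i := i₁) (v := v₁) (by omega) (by omega) (insertAt n i₂ (n - 1) k)
  simp only [insertAt₂, Equiv.Perm.mul_apply]
  omega

theorem insertAt_fishburn_avoids {i v : ℕ} (hiv : i ≤ v) (hv : v < n) (hnv : n ≤ v + 2) :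
    IsFishburn (insertAt n i v) ∧ Avoids (insertAt n i v) ![3, 2, 1] ∧
      Avoids (insertAt n i v) ![2, 1, 3, 4] := by
  have spec := val_insertAt hiv hv
  refine ⟨(isFishburn_iff _).2 fun a a' b _ _ => ?_, (avoids_321_iff _).2 fun a b c _ _ => ?_,
    (avoids_2134_iff _).2 fun a b c d _ _ _ => ?_⟩
  · have := spec a; have := spec a'; have := spec b; simp only [Fin.lt_def]; omega
  · have := spec a; have := spec b; have := spec c; simp only [Fin.lt_def]; omega
  · have := spec a; have := spec b; have := spec c; have := spec d; simp only [Fin.lt_def]; omega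

theorem insertAt₂_fishburn_avoids {i₁ v₁ i₂ : ℕ} (h₁₂ : i₁ + 2 ≤ i₂) (h₂ : i₂ + 2 ≤ n)
    (hv₁ : n ≤ v₁ + 3) (hv₁' : v₁ + 2 ≤ n) :
    IsFishburn (insertAt₂ n i₁ v₁ i₂) ∧ Avoids (insertAt₂ n i₁ v₁ i₂) ![3, 2, 1] ∧
      Avoids (insertAt₂ n i₁ v₁ i₂) ![2, 1, 3, 4] := by
  have spec := val_insertAt₂ h₁₂ h₂ hv₁ hv₁'
  refine ⟨(isFishburn_iff _).2 fun a a' b _ _ => ?_, (avoids_321_iff _).2 fun a b c _ _ => ?_,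
    (avoids_2134_iff _).2 fun a b c d _ _ _ => ?_⟩
  · have := spec a; have := spec a'; have := spec b; simp only [Fin.lt_def]; omega
  · have := spec a; have := spec b; have := spec c; simp only [Fin.lt_def]; omega
  · have := spec a; have := spec b; have := spec c; have := spec d; simp only [Fin.lt_def]; omega

theorem insertAt_injOn {v : ℕ} (hv : v < n) : Set.InjOn (fun i => insertAt n i v) (Set.Iic v) := by
  intro i (hi : i ≤ v) i' (hi' : i' ≤ v) (h : insertAt n i v = insertAt n i' v)
  obtain ⟨k, hk⟩ : ∃ k : Fin n, (k : ℕ) = i := ⟨⟨i, by omega⟩, rfl⟩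
  have := congrArg Fin.val (DFunLike.congr_fun h k)
  have := val_insertAt hi hv k
  have := val_insertAt hi' hv k
  omega

theorem insertAt_top_ne_insertAt {i i' : ℕ} (hi : i < n) (hi' : i' < n - 2) :
    insertAt n i (n - 1) ≠ insertAt n i' (n - 2) := by
  intro h
  obtain ⟨k, hk⟩ : ∃ k : Fin n, (k : ℕ) = i' := ⟨⟨i', by omega⟩, rfl⟩
  have := congrArg Fin.val (DFunLike.congr_fun h k)
  have := val_insertAt (i := i) (v := n - 1) (by omega) (by omega) k
  have := val_insertAt (i := i') (v := n - 2) (by omega) (by omega) k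
  omega

theorem insertAt_ne_insertAt₂ {i v i₁ v₁ i₂ : ℕ} (hiv : i ≤ v) (hv : v < n)
    (h₁₂ : i₁ + 2 ≤ i₂) (h₂ : i₂ + 2 ≤ n) (hv₁ : n ≤ v₁ + 3) (hv₁' : v₁ + 2 ≤ n) :
    insertAt n i v ≠ insertAt₂ n i₁ v₁ i₂ := by
  intro h
  obtain ⟨k₁, hk₁⟩ : ∃ k : Fin n, (k : ℕ) = i₁ := ⟨⟨i₁, by omega⟩, rfl⟩
  obtain ⟨k₂, hk₂⟩ : ∃ k : Fin n, (k : ℕ) = i₂ := ⟨⟨i₂, by omega⟩, rfl⟩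
  have := congrArg Fin.val (DFunLike.congr_fun h k₁)
  have := congrArg Fin.val (DFunLike.congr_fun h k₂)
  have := val_insertAt hiv hv k₁
  have := val_insertAt hiv hv k₂
  have := val_insertAt₂ h₁₂ h₂ hv₁ hv₁' k₁
  have := val_insertAt₂ h₁₂ h₂ hv₁ hv₁' k₂
  omega

theorem insertAt₂_inj {i₁ v₁ i₂ i₁' v₁' i₂' : ℕ} (h₁₂ : i₁ + 2 ≤ i₂) (h₂ : i₂ + 2 ≤ n)
    (hv₁ : n ≤ v₁ + 3) (hv₁' : v₁ + 2 ≤ n) (h₁₂' : i₁' + 2 ≤ i₂') (h₂' : i₂' + 2 ≤ n)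
    (hw₁ : n ≤ v₁' + 3) (hw₁' : v₁' + 2 ≤ n)
    (h : insertAt₂ n i₁ v₁ i₂ = insertAt₂ n i₁' v₁' i₂') : i₁ = i₁' ∧ v₁ = v₁' ∧ i₂ = i₂' := by
  obtain ⟨k₁, hk₁⟩ : ∃ k : Fin n, (k : ℕ) = i₁ := ⟨⟨i₁, by omega⟩, rfl⟩
  obtain ⟨k₂, hk₂⟩ : ∃ k : Fin n, (k : ℕ) = i₂ := ⟨⟨i₂, by omega⟩, rfl⟩
  have e₂ := congrArg Fin.val (DFunLike.congr_fun h k₂)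
  have := val_insertAt₂ h₁₂ h₂ hv₁ hv₁' k₂
  have := val_insertAt₂ h₁₂' h₂' hw₁ hw₁' k₂
  obtain rfl : i₂ = i₂' := by omega
  have e₁ := congrArg Fin.val (DFunLike.congr_fun h k₁)
  have := val_insertAt₂ h₁₂ h₂ hv₁ hv₁' k₁
  have := val_insertAt₂ h₁₂' h₂' hw₁ hw₁' k₁
  omega

end insertAt

section Classification

variable {n : ℕ} {π : Equiv.Perm (Fin n)}

theorem apply_succ_first_excedance (hF : IsFishburn π) (h3 : Avoids π ![3, 2, 1]) {i b : Fin n}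
    (hi : i < π i) (hmin : ∀ j < i, π j ≤ j) (hb : (b : ℕ) = i + 1) : π b ≤ b ∧ π b < π i := by
  have hib : i < b := Fin.lt_def.2 (by omega)
  have hbb : π b ≤ b := by
    by_contra! hb'
    have hπib := apply_lt_apply_of_excedance h3 hib hi hb'
    -- the value `π i - 1` then sits after position `i + 1`, completing a Fishburn pattern
    obtain ⟨s, hs⟩ := π.surjective ⟨π i - 1, by omega⟩
    have hs' : (π s : ℕ) = π i - 1 := by rw [hs]
    have hbs : (i : ℕ) + 1 < s := by
      by_contra! hsi
      rcases lt_trichotomy s i with h | rfl | h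
      · have := hmin s h; omega
      · omega
      · obtain rfl : s = b := Fin.ext (by omega); omega
    exact (isFishburn_iff π).1 hF i b s hb hbs ⟨hπib, Fin.lt_def.2 (by omega), by omega⟩
  exact ⟨hbb, lt_of_le_of_ne (Fin.le_def.2 (by omega)) (π.injective.ne hib.ne')⟩

theorem false_of_nonexcedance_values_above (h3 : Avoids π ![3, 2, 1])
    (h4 : Avoids π ![2, 1, 3, 4]) {i b : Fin n} (hi : i < π i) (hb : (b : ℕ) = i + 1)
    (hbi : π b < π i) (hn : (π i : ℕ) + 3 ≤ n)
    (hnon : ∀ j, π i < π j → (π j : ℕ) ≤ π i + 2 → π j ≤ j) : False := by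
  obtain ⟨c, hc⟩ := π.surjective ⟨π i + 1, by omega⟩
  obtain ⟨d, hd⟩ := π.surjective ⟨π i + 2, by omega⟩
  have hc' : (π c : ℕ) = π i + 1 := by rw [hc]
  have hd' : (π d : ℕ) = π i + 2 := by rw [hd]
  have hcc := hnon c (Fin.lt_def.2 (by omega)) (by omega)
  have hdd := hnon d (Fin.lt_def.2 (by omega)) (by omega)
  have hcd : c < d := by
    rcases lt_trichotomy c d with h | rfl | h
    · exact h
    · omega
    · have := apply_lt_apply_of_nonexcedance h3 h hdd hcc; omega
  exact (avoids_2134_iff π).1 h4 i b c d (by omega) (by omega) hcd ⟨hbi, by omega, by omega⟩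

theorem eq_insertAt_of_no_excedance [NeZero n] (h3 : Avoids π ![3, 2, 1]) (hE : ∀ j, π j ≤ j) :
    π = insertAt n (n - 1) (n - 1) := by
  have hn : n ≠ 0 := NeZero.ne n
  have spec := val_insertAt (n := n) le_rfl (by omega : n - 1 < n)
  refine eq_of_avoids_321_of_excedances h3
    (insertAt_fishburn_avoids le_rfl (by omega) (by omega)).2.1 (fun j => ?_)
    (fun j hj => absurd hj (hE j).not_gt)
  have := spec j; have := hE j; rw [Fin.lt_def, Fin.lt_def]; rw [Fin.le_def] at this; omega

theorem eq_insertAt_of_unique_excedance [NeZero n] (h3 : Avoids π ![3, 2, 1])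
    (h4 : Avoids π ![2, 1, 3, 4]) {i b : Fin n} (hi : i < π i) (hb : (b : ℕ) = i + 1)
    (hbi : π b < π i) (hone : ∀ j, j < π j → j = i) :
    n ≤ π i + 2 ∧ π = insertAt n i (π i) := by
  have hv : n ≤ π i + 2 := by
    by_contra!
    refine false_of_nonexcedance_values_above h3 h4 hi hb hbi (by omega) fun j hj _ => ?_
    exact not_lt.1 fun hj' => hj.ne (congrArg π (hone j hj')).symm
  have hiv : (i : ℕ) ≤ π i := Fin.le_def.1 hi.le
  have spec := val_insertAt hiv (π i).isLt
  refine ⟨hv, eq_of_avoids_321_of_excedances h3 (insertAt_fishburn_avoids hiv (π i).isLt hv).2.1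
    (fun j => ⟨fun hj => ?_, fun hj => ?_⟩) (fun j hj => ?_)⟩
  · obtain rfl := hone j hj; have := spec j; rw [Fin.lt_def]; omega
  · obtain rfl : j = i := Fin.ext (by have := spec j; rw [Fin.lt_def] at hj; omega)
    exact hi
  · obtain rfl := hone j hj; have := spec j; ext; omega

theorem succ_first_excedance_lt_excedance {i b j : Fin n} (hmin : ∀ j < i, π j ≤ j)
    (hb : (b : ℕ) = i + 1) (hbb : π b ≤ b) (hj : j < π j) (hji : j ≠ i) : b < j := by
  have hij : i < j := lt_of_le_of_ne (not_lt.1 fun h => (hmin j h).not_gt hj) hji.symm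
  have hjb : j ≠ b := by rintro rfl; exact hbb.not_gt hj
  rw [Fin.lt_def] at hij ⊢; rw [Ne, Fin.ext_iff] at hjb; omega

theorem eq_or_eq_of_excedance (h3 : Avoids π ![3, 2, 1]) (h4 : Avoids π ![2, 1, 3, 4])
    {i₁ i₂ b : Fin n} (hi₁ : i₁ < π i₁) (hmin : ∀ j < i₁, π j ≤ j) (hb : (b : ℕ) = i₁ + 1)
    (hbb : π b ≤ b) (hbi : π b < π i₁) (hi₂ : i₂ < π i₂) (hne : i₂ ≠ i₁) {j : Fin n}
    (hj : j < π j) : j = i₁ ∨ j = i₂ := by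
  by_contra! hj'
  have hbi₂ := succ_first_excedance_lt_excedance hmin hb hbb hi₂ hne
  have hbj := succ_first_excedance_lt_excedance hmin hb hbb hj hj'.1
  have above : ∀ {c}, b < c → c < π c → π i₁ < π c := fun hbc hc =>
    apply_lt_apply_of_excedance h3 (Fin.lt_def.2 (by rw [Fin.lt_def] at hbc; omega)) hi₁ hc
  rcases lt_or_gt_of_ne hj'.2 with h | h
  · exact (avoids_2134_iff π).1 h4 i₁ b j i₂ (Fin.lt_def.2 (by omega)) hbj h
      ⟨hbi, above hbj hj, apply_lt_apply_of_excedance h3 h hj hi₂⟩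
  · exact (avoids_2134_iff π).1 h4 i₁ b i₂ j (Fin.lt_def.2 (by omega)) hbi₂ h
      ⟨hbi, above hbi₂ hi₂, apply_lt_apply_of_excedance h3 h hi₂ hj⟩

theorem eq_insertAt₂_of_two_excedances [NeZero n] (h3 : Avoids π ![3, 2, 1])
    (h4 : Avoids π ![2, 1, 3, 4]) {i₁ i₂ b : Fin n} (hi₁ : i₁ < π i₁) (hmin : ∀ j < i₁, π j ≤ j)
    (hb : (b : ℕ) = i₁ + 1) (hbb : π b ≤ b) (hbi : π b < π i₁) (hi₂ : i₂ < π i₂)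
    (hne : i₂ ≠ i₁) :
    i₁ + 2 ≤ (i₂ : ℕ) ∧ (i₂ : ℕ) + 2 ≤ n ∧ n ≤ π i₁ + 3 ∧ (π i₁ : ℕ) + 2 ≤ n ∧
      π = insertAt₂ n i₁ (π i₁) i₂ := by
  have hbi₂ := succ_first_excedance_lt_excedance hmin hb hbb hi₂ hne
  have hπ₁₂ := apply_lt_apply_of_excedance h3 (Fin.lt_def.2 (by omega)) hi₁ hi₂
  have hexc := fun {j} => eq_or_eq_of_excedance h3 h4 hi₁ hmin hb hbb hbi hi₂ hne (j := j)
  have hnon : ∀ j, π j ≠ π i₁ → π j ≠ π i₂ → π j ≤ j := fun j h₁ h₂ =>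
    not_lt.1 fun hj => (hexc hj).elim (fun h => h₁ (h ▸ rfl)) (fun h => h₂ (h ▸ rfl))
  have htop : (π i₂ : ℕ) = n - 1 := by
    by_contra! htop
    obtain ⟨d, hd⟩ := π.surjective ⟨n - 1, by omega⟩
    have hd' : (π d : ℕ) = n - 1 := by rw [hd]
    have hdd := hnon d (fun h => by rw [h] at hd'; omega) (fun h => by rw [h] at hd'; omega)
    exact (avoids_2134_iff π).1 h4 i₁ b i₂ d (Fin.lt_def.2 (by omega)) hbi₂
      (Fin.lt_def.2 (by omega)) ⟨hbi, hπ₁₂, Fin.lt_def.2 (by omega)⟩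
  have hv₁ : n ≤ π i₁ + 3 := by
    by_contra!
    refine false_of_nonexcedance_values_above h3 h4 hi₁ hb hbi (by omega) fun j hj hj' => ?_
    exact hnon j hj.ne' (fun h => by rw [h] at hj'; omega)
  have hgap : (i₁ : ℕ) + 2 ≤ i₂ := by rw [Fin.lt_def] at hbi₂; omega
  have spec := val_insertAt₂ (n := n) hgap (by omega) hv₁ (by omega)
  refine ⟨hgap, by omega, hv₁, by omega, eq_of_avoids_321_of_excedances h3
    (insertAt₂_fishburn_avoids hgap (by omega) hv₁ (by omega)).2.1
    (fun j => ⟨fun hj => ?_, fun hj => ?_⟩) (fun j hj => ?_)⟩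
  · have := spec j; rcases hexc hj with rfl | rfl <;> rw [Fin.lt_def] <;> omega
  · have := spec j
    obtain rfl | rfl : j = i₁ ∨ j = i₂ := by
      rw [Fin.lt_def] at hj; rw [Fin.ext_iff, Fin.ext_iff]; omega
    · exact hi₁
    · exact hi₂
  · have := spec j; ext; rcases hexc hj with rfl | rfl <;> omega

end Classification

open Finset

theorem sum_range_sub_one_mul_two (m : ℕ) : (∑ j ∈ range m, (j - 1)) * 2 = (m - 1) * (m - 2) := by
  rcases m with _ | m
  · simp
  · simp [sum_range_succ', sum_range_id_mul_two]

/-- Indexed by `i < n`, by `i < n - 2`, and by `(⟨i₂, i₁⟩, t)` with `i₁ + 2 ≤ i₂ ≤ n - 2` and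
`v₁ = n - 3 + t ∈ {n - 3, n - 2}`. -/
def fishburnFamily (n : ℕ) [NeZero n] : Finset (Equiv.Perm (Fin n)) :=
  ((range n).image fun i => insertAt n i (n - 1)) ∪
    ((range (n - 2)).image fun i => insertAt n i (n - 2)) ∪
    ((((range (n - 1)).sigma fun i₂ => range (i₂ - 1)) ×ˢ range 2).image fun p =>
      insertAt₂ n p.1.2 (n - 3 + p.2) p.1.1)

section fishburnFamily

variable {n : ℕ} [NeZero n] {π : Equiv.Perm (Fin n)}

theorem mem_fishburnFamily_of_avoids (hF : IsFishburn π) (h3 : Avoids π ![3, 2, 1])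
    (h4 : Avoids π ![2, 1, 3, 4]) : π ∈ fishburnFamily n := by
  have hn : n ≠ 0 := NeZero.ne n
  by_cases hE : ∃ j, j < π j
  swap
  · push Not at hE
    rw [eq_insertAt_of_no_excedance h3 hE]
    exact mem_union_left _ (mem_union_left _ (mem_image.2 ⟨n - 1, by simp; omega, rfl⟩))
  obtain ⟨i, hi, hmin⟩ : ∃ i, i < π i ∧ ∀ j < i, π j ≤ j := by
    obtain ⟨i, hi, hmin⟩ := wellFounded_lt.has_min {j | j < π j} hE
    exact ⟨i, hi, fun j hj => not_lt.1 fun h => hmin j h hj⟩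
  obtain ⟨b, hb⟩ : ∃ b : Fin n, (b : ℕ) = i + 1 := ⟨⟨i + 1, by omega⟩, rfl⟩
  obtain ⟨hbb, hbi⟩ := apply_succ_first_excedance hF h3 hi hmin hb
  by_cases h₂ : ∃ i₂, i₂ < π i₂ ∧ i₂ ≠ i
  · obtain ⟨i₂, hi₂, hne⟩ := h₂
    obtain ⟨hgap, hi₂n, hv₁, hv₁n, heq⟩ :=
      eq_insertAt₂_of_two_excedances h3 h4 hi hmin hb hbb hbi hi₂ hne
    rw [heq]
    refine mem_union_right _ (mem_image.2 ⟨⟨⟨i₂, i⟩, π i - (n - 3)⟩, ?_, ?_⟩)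
    · simp only [mem_product, mem_sigma, mem_range]; omega
    · congr 1; omega
  · push Not at h₂
    obtain ⟨hv, heq⟩ := eq_insertAt_of_unique_excedance h3 h4 hi hb hbi h₂
    rw [heq]
    obtain htop | htop : (π i : ℕ) = n - 1 ∨ (π i : ℕ) = n - 2 := by omega
    · exact mem_union_left _ (mem_union_left _ (mem_image.2 ⟨i, by simp, by rw [htop]⟩))
    · exact mem_union_left _ (mem_union_right _ (mem_image.2 ⟨i, by simp; omega, by rw [htop]⟩))

theorem fishburn_avoids_of_mem_fishburnFamily (hπ : π ∈ fishburnFamily n) :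
    IsFishburn π ∧ Avoids π ![3, 2, 1] ∧ Avoids π ![2, 1, 3, 4] := by
  simp only [fishburnFamily, mem_union, mem_image, mem_product, mem_sigma, mem_range] at hπ
  rcases hπ with (⟨i, hi, rfl⟩ | ⟨i, hi, rfl⟩) | ⟨⟨⟨i₂, i₁⟩, t⟩, ⟨⟨hi₂, hi₁⟩, ht⟩, rfl⟩
  · exact insertAt_fishburn_avoids (by omega) (by omega) (by omega)
  · exact insertAt_fishburn_avoids (by omega) (by omega) (by omega)
  · refine insertAt₂_fishburn_avoids ?_ ?_ ?_ ?_ <;> omega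

theorem card_fishburnFamily :
    #(fishburnFamily n) = n + (n - 2) + (n - 2) * (n - 3) := by
  have hn : n ≠ 0 := NeZero.ne n
  rw [fishburnFamily, card_union_of_disjoint, card_union_of_disjoint, card_image_of_injOn,
    card_image_of_injOn, card_image_of_injOn, card_product, card_sigma, card_range, card_range,
    card_range]
  · simp only [card_range]
    rw [sum_range_sub_one_mul_two, Nat.sub_sub, Nat.sub_sub]
  · rintro ⟨⟨i₂, i₁⟩, t⟩ hp ⟨⟨i₂', i₁'⟩, t'⟩ hp' h
    simp only [coe_product, coe_sigma, coe_range, Set.mem_prod, Set.mem_sigma_iff,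
      Set.mem_Iio] at hp hp'
    dsimp only at h
    obtain ⟨rfl, h', rfl⟩ := insertAt₂_inj (by omega) (by omega) (by omega) (by omega) (by omega)
      (by omega) (by omega) (by omega) h
    obtain rfl : t = t' := by omega
    rfl
  · exact (insertAt_injOn (by omega)).mono fun i hi => by simp at hi ⊢; omega
  · exact (insertAt_injOn (by omega)).mono fun i hi => by simp at hi ⊢; omega
  · simp only [disjoint_left, mem_image, mem_range]
    rintro _ ⟨i, hi, rfl⟩ ⟨i', hi', h⟩
    exact insertAt_top_ne_insertAt hi hi' h.symm
  · simp only [disjoint_left, mem_union, mem_image, mem_range, mem_product, mem_sigma]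
    rintro _ (⟨i, hi, rfl⟩ | ⟨i, hi, rfl⟩) ⟨⟨⟨i₂, i₁⟩, t⟩, ⟨⟨hi₂, hi₁⟩, ht⟩, h⟩
    · exact insertAt_ne_insertAt₂ (by omega) (by omega) (by omega) (by omega) (by omega)
        (by omega) h.symm
    · exact insertAt_ne_insertAt₂ (by omega) (by omega) (by omega) (by omega) (by omega)
        (by omega) h.symm

end fishburnFamily

theorem fishburn_321_2134 (n : ℕ) (hn : 2 ≤ n) :
    ({π : Equiv.Perm (Fin n) | IsFishburn π ∧ Avoids π ![3, 2, 1] ∧ Avoids π ![2, 1, 3, 4]}.ncard : ℤ) = n ^ 2 - 3 * n + 4 := by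
  have : NeZero n := ⟨by omega⟩
  have hset : {π : Equiv.Perm (Fin n) | IsFishburn π ∧ Avoids π ![3, 2, 1] ∧
      Avoids π ![2, 1, 3, 4]} = fishburnFamily n :=
    Set.ext fun _ => ⟨fun ⟨hF, h3, h4⟩ => mem_fishburnFamily_of_avoids hF h3 h4,
      fishburn_avoids_of_mem_fishburnFamily⟩
  rw [hset, Set.ncard_coe_finset, card_fishburnFamily]
  obtain ⟨m, rfl⟩ : ∃ m, n = m + 2 := ⟨n - 2, by omega⟩
  rcases m with _ | m
  · norm_num
  · rw [show m + 1 + 2 - 2 = m + 1 by omega, show m + 1 + 2 - 3 = m by omega]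
    push_cast
    ring
end

section
/- For n ≥ 0, the number of Fishburn permutations of length n avoiding the classical patterns 321, 1423, and 2143 equals C(n,2) + 1. -/
def swapFun (k i : ℕ) : ℕ := if i = k then k+1 else if i = k+1 then k else i

def sigmaFun (m j i : ℕ) : ℕ :=
  if i = 0 then m else if i < m then i - 1 else if i < j then i + 1
  else if i = j then m - 1 else i

def sigmaInv (m j v : ℕ) : ℕ :=
  if v = m then 0 else if v + 1 < m then v + 1 else if v + 1 = m then j
  else if v ≤ j then v - 1 else v

lemma swapFun_cases (k i : ℕ) :
    (i = k ∧ swapFun k i = k + 1) ∨ (i = k + 1 ∧ swapFun k i = k) ∨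
    (i ≠ k ∧ i ≠ k + 1 ∧ swapFun k i = i) := by
  simp only [swapFun]; repeat' split
  all_goals omega

lemma sigmaFun_cases (m j i : ℕ) (h1 : 2 ≤ m) (h2 : m ≤ j) :
    (i = 0 ∧ sigmaFun m j i = m) ∨
    (1 ≤ i ∧ i < m ∧ sigmaFun m j i = i - 1) ∨
    (m ≤ i ∧ i < j ∧ sigmaFun m j i = i + 1) ∨
    (i = j ∧ sigmaFun m j i = m - 1) ∨
    (j < i ∧ sigmaFun m j i = i) := by
  simp only [sigmaFun]; repeat' split
  all_goals omega

def swapPerm (n k : ℕ) (h : k + 1 < n) : Equiv.Perm (Fin n) where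
  toFun i := ⟨swapFun k i, by
    have := i.isLt; rcases swapFun_cases k i with ⟨_,e⟩|⟨_,e⟩|⟨_,_,e⟩ <;> omega⟩
  invFun i := ⟨swapFun k i, by
    have := i.isLt; rcases swapFun_cases k i with ⟨_,e⟩|⟨_,e⟩|⟨_,_,e⟩ <;> omega⟩
  left_inv i := by
    ext; simp only [swapFun]; repeat' split
    all_goals omega
  right_inv i := by
    ext; simp only [swapFun]; repeat' split
    all_goals omega

def sigmaPerm (n m j : ℕ) (h1 : 2 ≤ m) (h2 : m ≤ j) (h3 : j < n) : Equiv.Perm (Fin n) where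
  toFun i := ⟨sigmaFun m j i, by
    have := i.isLt
    rcases sigmaFun_cases m j i h1 h2 with ⟨_,e⟩|⟨_,_,e⟩|⟨_,_,e⟩|⟨_,e⟩|⟨_,e⟩ <;> omega⟩
  invFun v := ⟨sigmaInv m j v, by
    have := v.isLt; simp only [sigmaInv]; repeat' split
    all_goals omega⟩
  left_inv i := by
    ext; simp only [sigmaFun]; repeat' split
    all_goals (simp only [sigmaInv]; repeat' split)
    all_goals first | omega | simp_all
  right_inv v := by
    ext; simp only [sigmaInv]; repeat' split
    all_goals (simp only [sigmaFun]; repeat' split)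
    all_goals first | omega | simp_all

lemma swapPerm_apply (n k : ℕ) (h : k + 1 < n) (i : Fin n) :
    (swapPerm n k h i : ℕ) = swapFun k i := rfl

lemma sigmaPerm_apply (n m j : ℕ) (h1 : 2 ≤ m) (h2 : m ≤ j) (h3 : j < n) (i : Fin n) :
    (sigmaPerm n m j h1 h2 h3 i : ℕ) = sigmaFun m j i := rfl

def pairs (n : ℕ) : Finset (ℕ × ℕ) :=
  (Finset.range n ×ˢ Finset.range n).filter fun p => p.1 < p.2

lemma mem_pairs {n : ℕ} {p : ℕ × ℕ} : p ∈ pairs n ↔ p.1 < p.2 ∧ p.2 < n := by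
  simp only [pairs, Finset.mem_filter, Finset.mem_product, Finset.mem_range]
  constructor
  · rintro ⟨⟨h1, h2⟩, h3⟩; exact ⟨h3, h2⟩
  · rintro ⟨h1, h2⟩; exact ⟨⟨by omega, h2⟩, h1⟩

lemma pairs_card (n : ℕ) : (pairs n).card = n.choose 2 := by
  have : pairs n = (Finset.range n).biUnion
      (fun b => (Finset.range b).image fun a => (a, b)) := by
    ext ⟨a, b⟩
    simp only [mem_pairs, Finset.mem_biUnion, Finset.mem_range, Finset.mem_image,
      Prod.mk.injEq]
    constructor
    · rintro ⟨h1, h2⟩; exact ⟨b, h2, a, h1, rfl, rfl⟩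
    · rintro ⟨b', hb', a', ha', rfl, rfl⟩; exact ⟨ha', hb'⟩
  rw [this, Finset.card_biUnion]
  · have he : ∀ b, ((Finset.range b).image fun a => (a, b)).card = b := by
      intro b
      rw [Finset.card_image_of_injective _ (fun x y h => (Prod.mk.injEq _ _ _ _).mp h |>.1),
        Finset.card_range]
    rw [Finset.sum_congr rfl fun b _ => he b]
    have := Finset.sum_range_id_mul_two n
    rw [Nat.choose_two_right]
    omega
  · intro x hx y hy hxy
    simp only [Finset.disjoint_left, Finset.mem_image, Finset.mem_range]
    rintro ⟨a, b⟩ ⟨a', ha', e1, e2⟩ ⟨a'', ha'', e1', e2'⟩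
    apply hxy
    omega

def gmap (n : ℕ) (p : ℕ × ℕ) : Equiv.Perm (Fin n) :=
  if h : p.1 < p.2 ∧ p.2 < n then
    if h2 : p.2 = p.1 + 1 then swapPerm n p.1 (by omega)
    else sigmaPerm n (p.1 + 2) p.2 (by omega) (by omega) h.2
  else 1

lemma gmap_swap {n : ℕ} {a b : ℕ} (h1 : a < b) (h2 : b < n) (h3 : b = a + 1) :
    gmap n (a, b) = swapPerm n a (by omega) := by
  simp only [gmap, dif_pos (⟨h1, h2⟩ : a < b ∧ b < n), dif_pos h3]

lemma gmap_sigma {n : ℕ} {a b : ℕ} (h1 : a < b) (h2 : b < n) (h3 : b ≠ a + 1) :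
    gmap n (a, b) = sigmaPerm n (a + 2) b (by omega) (by omega) h2 := by
  simp only [gmap, dif_pos (⟨h1, h2⟩ : a < b ∧ b < n), dif_neg h3]

lemma gmap_injOn (n : ℕ) : Set.InjOn (gmap n) ↑(pairs n) := by
  rintro ⟨a, b⟩ hp ⟨a', b'⟩ hq heq
  rw [Finset.mem_coe, mem_pairs] at hp hq
  obtain ⟨hab, hbn⟩ := hp
  obtain ⟨hab', hbn'⟩ := hq
  by_cases e1 : b = a + 1 <;> by_cases e2 : b' = a' + 1
  · -- swap / swap
    rw [gmap_swap hab hbn e1, gmap_swap hab' hbn' e2] at heq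
    have hval := congrArg (fun (e : Equiv.Perm (Fin n)) => ((e ⟨a, by omega⟩ : Fin n) : ℕ)) heq
    simp only [swapPerm_apply] at hval
    have c1 := swapFun_cases a a
    have c2 := swapFun_cases a' a
    have : a = a' := by omega
    subst this
    have : b = b' := by omega
    subst this
    rfl
  · -- swap / sigma
    exfalso
    rw [gmap_swap hab hbn e1, gmap_sigma hab' hbn' e2] at heq
    have hval := congrArg (fun (e : Equiv.Perm (Fin n)) => ((e ⟨0, by omega⟩ : Fin n) : ℕ)) heq
    simp only [swapPerm_apply, sigmaPerm_apply] at hval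
    have c1 := swapFun_cases a 0
    have c2 := sigmaFun_cases (a' + 2) b' 0 (by omega) (by omega)
    omega
  · -- sigma / swap
    exfalso
    rw [gmap_sigma hab hbn e1, gmap_swap hab' hbn' e2] at heq
    have hval := congrArg (fun (e : Equiv.Perm (Fin n)) => ((e ⟨0, by omega⟩ : Fin n) : ℕ)) heq
    simp only [swapPerm_apply, sigmaPerm_apply] at hval
    have c1 := sigmaFun_cases (a + 2) b 0 (by omega) (by omega)
    have c2 := swapFun_cases a' 0
    omega
  · -- sigma / sigma
    rw [gmap_sigma hab hbn e1, gmap_sigma hab' hbn' e2] at heq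
    have hval := congrArg (fun (e : Equiv.Perm (Fin n)) => ((e ⟨0, by omega⟩ : Fin n) : ℕ)) heq
    simp only [sigmaPerm_apply] at hval
    have c1 := sigmaFun_cases (a + 2) b 0 (by omega) (by omega)
    have c2 := sigmaFun_cases (a' + 2) b' 0 (by omega) (by omega)
    have haa : a = a' := by omega
    subst haa
    have hval2 := congrArg (fun (e : Equiv.Perm (Fin n)) => ((e ⟨b, by omega⟩ : Fin n) : ℕ)) heq
    simp only [sigmaPerm_apply] at hval2
    have c3 := sigmaFun_cases (a + 2) b b (by omega) (by omega)
    have c4 := sigmaFun_cases (a + 2) b' b (by omega) (by omega)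
    have : b = b' := by omega
    subst this
    rfl

lemma one_notin_image (n : ℕ) : (1 : Equiv.Perm (Fin n)) ∉ (pairs n).image (gmap n) := by
  intro h
  rw [Finset.mem_image] at h
  obtain ⟨⟨a, b⟩, hp, heq⟩ := h
  rw [mem_pairs] at hp
  obtain ⟨hab, hbn⟩ := hp
  by_cases e1 : b = a + 1
  · rw [gmap_swap hab hbn e1] at heq
    have hval := congrArg (fun (e : Equiv.Perm (Fin n)) => ((e ⟨a, by omega⟩ : Fin n) : ℕ)) heq
    simp only [swapPerm_apply, Equiv.Perm.coe_one, id_eq] at hval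
    have c1 := swapFun_cases a a
    omega
  · rw [gmap_sigma hab hbn e1] at heq
    have hval := congrArg (fun (e : Equiv.Perm (Fin n)) => ((e ⟨0, by omega⟩ : Fin n) : ℕ)) heq
    simp only [sigmaPerm_apply, Equiv.Perm.coe_one, id_eq] at hval
    have c1 := sigmaFun_cases (a + 2) b 0 (by omega) (by omega)
    omega

lemma target_card (n : ℕ) :
    (insert 1 ((pairs n).image (gmap n))).card = n.choose 2 + 1 := by
  rw [Finset.card_insert_of_notMem (one_notin_image n),
    Finset.card_image_of_injOn (gmap_injOn n), pairs_card]

lemma contains321_iff {n : ℕ} (π : Equiv.Perm (Fin n)) : Contains π ![3,2,1] ↔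
    ∃ a b c : Fin n, a < b ∧ b < c ∧ π b < π a ∧ π c < π b := by
  constructor
  · rintro ⟨f, hm, hp⟩
    exact ⟨f 0, f 1, f 2, hm (by decide), hm (by decide),
      (hp 1 0).mp (by decide), (hp 2 1).mp (by decide)⟩
  · rintro ⟨a, b, c, hab, hbc, h1, h2⟩
    have t1 : π c < π a := h2.trans h1
    refine ⟨![a, b, c], ?_, ?_⟩
    · intro i j hij
      fin_cases i <;> fin_cases j <;>
        first
        | exact absurd hij (by decide)
        | exact hab
        | exact hbc
        | exact hab.trans hbc
    · intro i j
      fin_cases i <;> fin_cases j <;>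
        first
        | exact iff_of_false (by decide) (lt_irrefl _)
        | exact iff_of_true (by decide) h1
        | exact iff_of_true (by decide) h2
        | exact iff_of_true (by decide) t1
        | exact iff_of_false (by decide) (asymm h1)
        | exact iff_of_false (by decide) (asymm h2)
        | exact iff_of_false (by decide) (asymm t1)

lemma contains1423_iff {n : ℕ} (π : Equiv.Perm (Fin n)) : Contains π ![1,4,2,3] ↔
    ∃ a b c d : Fin n, a < b ∧ b < c ∧ c < d ∧ π a < π c ∧ π c < π d ∧ π d < π b := by
  constructor
  · rintro ⟨f, hm, hp⟩
    exact ⟨f 0, f 1, f 2, f 3, hm (by decide), hm (by decide), hm (by decide),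
      (hp 0 2).mp (by decide), (hp 2 3).mp (by decide), (hp 3 1).mp (by decide)⟩
  · rintro ⟨a, b, c, d, hab, hbc, hcd, h1, h2, h3⟩
    have t1 : π a < π d := h1.trans h2
    have t2 : π a < π b := t1.trans h3
    have t3 : π c < π b := h2.trans h3
    refine ⟨![a, b, c, d], ?_, ?_⟩
    · intro i j hij
      fin_cases i <;> fin_cases j <;>
        first
        | exact absurd hij (by decide)
        | exact hab
        | exact hbc
        | exact hcd
        | exact hab.trans hbc
        | exact hbc.trans hcd
        | exact (hab.trans hbc).trans hcd
    · intro i j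
      fin_cases i <;> fin_cases j <;>
        first
        | exact iff_of_false (by decide) (lt_irrefl _)
        | exact iff_of_true (by decide) h1
        | exact iff_of_true (by decide) h2
        | exact iff_of_true (by decide) h3
        | exact iff_of_true (by decide) t1
        | exact iff_of_true (by decide) t2
        | exact iff_of_true (by decide) t3
        | exact iff_of_false (by decide) (asymm h1)
        | exact iff_of_false (by decide) (asymm h2)
        | exact iff_of_false (by decide) (asymm h3)
        | exact iff_of_false (by decide) (asymm t1)
        | exact iff_of_false (by decide) (asymm t2)
        | exact iff_of_false (by decide) (asymm t3)

lemma contains2143_iff {n : ℕ} (π : Equiv.Perm (Fin n)) : Contains π ![2,1,4,3] ↔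
    ∃ a b c d : Fin n, a < b ∧ b < c ∧ c < d ∧ π b < π a ∧ π a < π d ∧ π d < π c := by
  constructor
  · rintro ⟨f, hm, hp⟩
    exact ⟨f 0, f 1, f 2, f 3, hm (by decide), hm (by decide), hm (by decide),
      (hp 1 0).mp (by decide), (hp 0 3).mp (by decide), (hp 3 2).mp (by decide)⟩
  · rintro ⟨a, b, c, d, hab, hbc, hcd, h1, h2, h3⟩
    have t1 : π b < π d := h1.trans h2
    have t2 : π b < π c := t1.trans h3
    have t3 : π a < π c := h2.trans h3
    refine ⟨![a, b, c, d], ?_, ?_⟩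
    · intro i j hij
      fin_cases i <;> fin_cases j <;>
        first
        | exact absurd hij (by decide)
        | exact hab
        | exact hbc
        | exact hcd
        | exact hab.trans hbc
        | exact hbc.trans hcd
        | exact (hab.trans hbc).trans hcd
    · intro i j
      fin_cases i <;> fin_cases j <;>
        first
        | exact iff_of_false (by decide) (lt_irrefl _)
        | exact iff_of_true (by decide) h1
        | exact iff_of_true (by decide) h2
        | exact iff_of_true (by decide) h3
        | exact iff_of_true (by decide) t1
        | exact iff_of_true (by decide) t2
        | exact iff_of_true (by decide) t3
        | exact iff_of_false (by decide) (asymm h1)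
        | exact iff_of_false (by decide) (asymm h2)
        | exact iff_of_false (by decide) (asymm h3)
        | exact iff_of_false (by decide) (asymm t1)
        | exact iff_of_false (by decide) (asymm t2)
        | exact iff_of_false (by decide) (asymm t3)

section swap
variable (k : ℕ)

lemma swap_no321 (a b c : ℕ) (hab : a < b) (hbc : b < c) :
    ¬(swapFun k b < swapFun k a ∧ swapFun k c < swapFun k b) := by
  have ha := swapFun_cases k a
  have hb := swapFun_cases k b
  have hc := swapFun_cases k c
  omega

lemma swap_no1423 (a b c d : ℕ) (hab : a < b) (hbc : b < c) (hcd : c < d) :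
    ¬(swapFun k a < swapFun k c ∧ swapFun k c < swapFun k d ∧ swapFun k d < swapFun k b) := by
  have ha := swapFun_cases k a
  have hb := swapFun_cases k b
  have hc := swapFun_cases k c
  have hd := swapFun_cases k d
  omega

lemma swap_no2143 (a b c d : ℕ) (hab : a < b) (hbc : b < c) (hcd : c < d) :
    ¬(swapFun k b < swapFun k a ∧ swapFun k a < swapFun k d ∧ swapFun k d < swapFun k c) := by
  have ha := swapFun_cases k a
  have hb := swapFun_cases k b
  have hc := swapFun_cases k c
  have hd := swapFun_cases k d
  omega

lemma swap_noF (i j : ℕ) (hij : i + 1 < j) (h : swapFun k i < swapFun k (i+1)) :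
    swapFun k i ≠ swapFun k j + 1 := by
  have ha := swapFun_cases k i
  have hb := swapFun_cases k (i+1)
  have hc := swapFun_cases k j
  omega

end swap

section sigma
variable (m j : ℕ) (h1 : 2 ≤ m) (h2 : m ≤ j)
include h1 h2

lemma sigma_no321 (a b c : ℕ) (hab : a < b) (hbc : b < c) :
    ¬(sigmaFun m j b < sigmaFun m j a ∧ sigmaFun m j c < sigmaFun m j b) := by
  have ha := sigmaFun_cases m j a h1 h2
  have hb := sigmaFun_cases m j b h1 h2
  have hc := sigmaFun_cases m j c h1 h2
  omega

lemma sigma_no1423 (a b c d : ℕ) (hab : a < b) (hbc : b < c) (hcd : c < d) :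
    ¬(sigmaFun m j a < sigmaFun m j c ∧ sigmaFun m j c < sigmaFun m j d ∧
      sigmaFun m j d < sigmaFun m j b) := by
  have ha := sigmaFun_cases m j a h1 h2
  have hb := sigmaFun_cases m j b h1 h2
  have hc := sigmaFun_cases m j c h1 h2
  have hd := sigmaFun_cases m j d h1 h2
  omega

lemma sigma_no2143 (a b c d : ℕ) (hab : a < b) (hbc : b < c) (hcd : c < d) :
    ¬(sigmaFun m j b < sigmaFun m j a ∧ sigmaFun m j a < sigmaFun m j d ∧
      sigmaFun m j d < sigmaFun m j c) := by
  have ha := sigmaFun_cases m j a h1 h2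
  have hb := sigmaFun_cases m j b h1 h2
  have hc := sigmaFun_cases m j c h1 h2
  have hd := sigmaFun_cases m j d h1 h2
  omega

lemma sigma_noF (i i' : ℕ) (hij : i + 1 < i') (h : sigmaFun m j i < sigmaFun m j (i+1)) :
    sigmaFun m j i ≠ sigmaFun m j i' + 1 := by
  have ha := sigmaFun_cases m j i h1 h2
  have hb := sigmaFun_cases m j (i+1) h1 h2
  have hc := sigmaFun_cases m j i' h1 h2
  omega

end sigma

lemma classify (n : ℕ) (v : ℕ → ℕ)
    (hlt : ∀ i, i < n → v i < n)
    (hinj : ∀ i, i < n → ∀ j, j < n → v i = v j → i = j)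
    (hsurj : ∀ w, w < n → ∃ i, i < n ∧ v i = w)
    (h321 : ∀ a b c, a < b → b < c → c < n → ¬(v b < v a ∧ v c < v b))
    (h1423 : ∀ a b c d, a < b → b < c → c < d → d < n → ¬(v a < v c ∧ v c < v d ∧ v d < v b))
    (h2143 : ∀ a b c d, a < b → b < c → c < d → d < n → ¬(v b < v a ∧ v a < v d ∧ v d < v c))
    (hF : ∀ i j, i + 1 < j → j < n → v i < v (i+1) → v i ≠ v j + 1) :
    (∀ i, i < n → v i = i) ∨
    (∃ k, k + 1 < n ∧ ∀ i, i < n → v i = swapFun k i) ∨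
    (∃ m j, 2 ≤ m ∧ m ≤ j ∧ j < n ∧ ∀ i, i < n → v i = sigmaFun m j i) := by
  by_cases hid : ∀ i, i < n → v i = i
  · exact Or.inl hid
  push_neg at hid
  classical
  have e01 : v (0 + 1) = v 1 := rfl
  obtain ⟨hkn, hkv⟩ : Nat.find hid < n ∧ v (Nat.find hid) ≠ Nat.find hid := Nat.find_spec hid
  set k := Nat.find hid with hkdef
  have hprefix : ∀ i, i < k → v i = i := by
    intro i hik
    by_contra hne
    exact Nat.find_min hid hik ⟨hik.trans hkn, hne⟩
  have hkm : k < v k := by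
    rcases Nat.lt_trichotomy (v k) k with h | h | h
    · exfalso
      have h1 : v (v k) = v k := hprefix _ h
      have := hinj (v k) (h.trans hkn) k hkn h1
      omega
    · exact absurd h hkv
    · exact h
  have hmn : v k < n := hlt k hkn
  set m := v k with hm
  rcases Nat.lt_or_ge k 1 with hk0' | hk1
  · -- k = 0
    have hk0 : k = 0 := by omega
    have hv0 : v 0 = m := by rw [← hk0]
    have hm1 : 1 ≤ m := by omega
    rcases Nat.lt_or_ge m 2 with hmlt2 | hm2
    · -- Case A : v 0 = 1, claim v = swapFun 0
      have hv01 : v 0 = 1 := by omega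
      obtain ⟨q, hqn, hq0⟩ := hsurj 0 (by omega)
      have hqne0 : q ≠ 0 := by intro h; rw [h] at hq0; omega
      have hq1 : q = 1 := by
        by_contra hq
        have hq2 : 2 ≤ q := by omega
        have h1n : 1 < n := by omega
        have hv1 : 2 ≤ v 1 := by
          have h1 : v 1 ≠ 1 := fun h =>
            by have := hinj 0 (by omega) 1 h1n (by omega); omega
          have h0 : v 1 ≠ 0 := fun h =>
            by have := hinj q hqn 1 h1n (by omega); omega
          omega
        exact hF 0 q (by omega) hqn (by omega) (by omega)
      have hv1 : v 1 = 0 := by rw [hq1] at hq0; exact hq0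
      have tail : ∀ i, i < n → 2 ≤ i → v i = i := by
        intro i
        induction i using Nat.strong_induction_on with
        | _ i ih =>
          intro hin hi2
          by_contra hne
          have hvi : i < v i := by
            rcases Nat.lt_trichotomy (v i) i with h | h | h
            · exfalso
              rcases Nat.lt_or_ge (v i) 2 with h2 | h2
              · rcases Nat.lt_or_ge (v i) 1 with h3 | h3
                · have := hinj i hin 1 (by omega) (by omega); omega
                · have := hinj i hin 0 (by omega) (by omega); omega
              · have h4 : v (v i) = v i := ih (v i) h (by omega) h2
                have := hinj (v i) (by omega) i hin h4
                omega
            · exact absurd h hne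
            · exact h
          obtain ⟨q2, hq2n, hq2⟩ := hsurj i hin
          have hq2i : i < q2 := by
            rcases Nat.lt_trichotomy q2 i with h | h | h
            · exfalso
              rcases Nat.lt_or_ge q2 2 with h2 | h2
              · rcases Nat.lt_or_ge q2 1 with h3 | h3
                · have : q2 = 0 := by omega
                  rw [this] at hq2; omega
                · have : q2 = 1 := by omega
                  rw [this] at hq2; omega
              · have := ih q2 h hq2n h2; omega
            · rw [h] at hq2; omega
            · exact h
          exact h2143 0 1 i q2 (by omega) (by omega) hq2i hq2n (by omega)
      refine Or.inr (Or.inl ⟨0, by omega, ?_⟩)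
      intro i hin
      rcases swapFun_cases 0 i with ⟨h, e⟩ | ⟨h, e⟩ | ⟨h1, h2, e⟩
      · rw [e, h]; omega
      · rw [e, h]; omega
      · rw [e]; exact tail i hin (by omega)
    · -- Case C : v 0 = m ≥ 2
      have small_inc : ∀ x y, 0 < x → x < y → y < n → v x < m → v y < m → v x < v y := by
        intro x y hx hxy hyn hxm hym
        by_contra hcon
        rcases Nat.lt_or_ge (v y) (v x) with h | h
        · exact h321 0 x y hx hxy hyn (by omega)
        · have : v x = v y := by omega
          have := hinj x (by omega) y hyn this
          omega
      have hv1 : v 1 = 0 := by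
        by_contra hc
        have h1n : 1 < n := by omega
        have hcm : v 1 ≠ m := fun h => by
          have := hinj 0 (by omega) 1 h1n (by omega); omega
        rcases Nat.lt_or_ge (v 1) m with hlt' | hgt'
        · obtain ⟨p0, hp0n, hp0⟩ := hsurj 0 (by omega)
          have : 2 ≤ p0 := by
            have h0 : p0 ≠ 0 := fun h => by rw [h] at hp0; omega
            have h1 : p0 ≠ 1 := fun h => by rw [h] at hp0; omega
            omega
          exact h321 0 1 p0 (by omega) (by omega) hp0n (by omega)
        · obtain ⟨pm, hpmn, hpm⟩ := hsurj (m-1) (by omega)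
          have : 2 ≤ pm := by
            have h0 : pm ≠ 0 := fun h => by rw [h] at hpm; omega
            have h1 : pm ≠ 1 := fun h => by rw [h] at hpm; omega
            omega
          exact hF 0 pm (by omega) hpmn (by omega) (by omega)
      have hsm : ∀ t, 1 ≤ t → t < m → v t = t - 1 := by
        intro t
        induction t using Nat.strong_induction_on with
        | _ t ih =>
          intro ht1 htm
          rcases Nat.lt_or_ge t 2 with ht2 | ht2
          · have : t = 1 := by omega
            rw [this, hv1]
          · by_contra hc
            have htn : t < n := by omega
            have hcm : v t ≠ m := fun h => by
              have := hinj 0 (by omega) t htn (by omega); omega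
            have hcsmall : ¬ v t ≤ t - 2 := by
              intro h
              have h1 : v (v t + 1) = v t := by
                have := ih (v t + 1) (by omega) (by omega) (by omega)
                omega
              have := hinj (v t + 1) (by omega) t htn h1
              omega
            -- position of t - 1
            obtain ⟨p, hpn, hp⟩ := hsurj (t-1) (by omega)
            have hpt : t + 1 ≤ p := by
              have h0 : p ≠ 0 := fun h => by rw [h] at hp; omega
              have hmid : ∀ x, 1 ≤ x → x < t → v x = x - 1 := by
                intro x hx1 hxt; exact ih x hxt hx1 (by omega)
              have h1 : ∀ x, 1 ≤ x → x < t → p ≠ x := by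
                intro x hx1 hxt heq
                rw [heq] at hp
                rw [hmid x hx1 hxt] at hp
                omega
              have h2 : p ≠ t := fun h => by rw [h] at hp; omega
              by_contra hcon
              push_neg at hcon
              rcases Nat.lt_or_ge p 1 with h | h
              · exact h0 (by omega)
              · rcases Nat.lt_or_ge p t with hh | hh
                · exact h1 p h hh rfl
                · exact h2 (by omega)
            rcases Nat.lt_or_ge (v t) m with hvtm | hvtm
            · -- v t < m : 321 pattern 0, t, p
              exact h321 0 t p (by omega) (by omega) hpn (by omega)
            · -- v t > m : 1423 pattern 1, t, p, pm
              have hvtm' : m < v t := by omega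
              obtain ⟨pm, hpmn, hpm⟩ := hsurj (m-1) (by omega)
              have hpmt : t + 1 ≤ pm := by
                have h0 : pm ≠ 0 := fun h => by rw [h] at hpm; omega
                have h1 : ∀ x, 1 ≤ x → x < t → pm ≠ x := by
                  intro x hx1 hxt heq
                  rw [heq] at hpm
                  rw [ih x hxt hx1 (by omega)] at hpm
                  omega
                have h2 : pm ≠ t := fun h => by rw [h] at hpm; omega
                by_contra hcon
                push_neg at hcon
                rcases Nat.lt_or_ge pm 1 with h | h
                · exact h0 (by omega)
                · rcases Nat.lt_or_ge pm t with hh | hh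
                  · exact h1 pm h hh rfl
                  · exact h2 (by omega)
              have hppm : p < pm := by
                rcases Nat.lt_trichotomy p pm with h | h | h
                · exact h
                · exfalso; rw [h] at hp; omega
                · exfalso
                  have := small_inc pm p (by omega) h hpn (by omega) (by omega)
                  omega
              exact h1423 1 t p pm (by omega) (by omega) hppm hpmn (by omega)
      -- position of m - 1
      obtain ⟨j, hjn, hj⟩ := hsurj (m-1) (by omega)
      have hjm : m ≤ j := by
        have h0 : j ≠ 0 := fun h => by rw [h] at hj; omega
        have h1 : ∀ x, 1 ≤ x → x < m → j ≠ x := by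
          intro x hx1 hxm heq
          rw [heq, hsm x hx1 hxm] at hj
          omega
        by_contra hcon
        push_neg at hcon
        rcases Nat.lt_or_ge j 1 with h | h
        · exact h0 (by omega)
        · exact h1 j h (by omega) rfl
      have big_inc : ∀ x y, x < y → y < n → m < v x → m < v y → v x < v y := by
        intro x y hxy hyn hxm hym
        have hx2 : 2 ≤ x := by
          have h0 : x ≠ 0 := fun h => by rw [h] at hxm; omega
          have h1 : x ≠ 1 := fun h => by rw [h] at hxm; omega
          omega
        by_contra hcon
        rcases Nat.lt_or_ge (v y) (v x) with h | h
        · exact h2143 0 1 x y (by omega) (by omega) hxy hyn (by omega)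
        · have : v x = v y := by omega
          have := hinj x (by omega) y hyn this
          omega
      have S5 : ∀ d i, j < i → i < n → n - i ≤ d → v i = i := by
        intro d
        induction d with
        | zero => intro i h1 h2 h3; omega
        | succ d ih =>
          intro i hji hin hd
          have habove : ∀ i', i < i' → i' < n → v i' = i' := by
            intro i' h1 h2
            exact ih i' (by omega) h2 (by omega)
          by_contra hne
          have hvlt : v i < i := by
            have h1 : ∀ i', i < i' → i' < n → v i ≠ i' := by
              intro i' hii' hi'n heq
              have := hinj i hin i' hi'n (by rw [heq, habove i' hii' hi'n])
              omega
            have := hlt i hin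
            by_contra hcon
            push_neg at hcon
            rcases Nat.lt_or_ge i (v i) with h | h
            · exact h1 (v i) h (hlt i hin) rfl
            · omega
          have hcm : v i ≠ m := fun h => by
            have := hinj 0 (by omega) i hin (by omega); omega
          have hclow : ¬ v i ≤ m - 2 := by
            intro h
            have h1 : v (v i + 1) = v i := by
              have := hsm (v i + 1) (by omega) (by omega)
              omega
            have := hinj (v i + 1) (by omega) i hin h1
            omega
          have hcm1 : v i ≠ m - 1 := fun h => by
            have := hinj i hin j hjn (by omega); omega
          -- so m + 1 ≤ v i < i
          obtain ⟨q, hqn, hq⟩ := hsurj i hin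
          have hqi : q < i := by
            rcases Nat.lt_trichotomy q i with h | h | h
            · exact h
            · exfalso; rw [h] at hq; omega
            · exfalso
              have := habove q h hqn
              omega
          have hqm : m ≤ q := by
            have h0 : q ≠ 0 := fun h => by rw [h] at hq; omega
            by_contra hcon
            push_neg at hcon
            have := hsm q (by omega) (by omega)
            omega
          have := big_inc q i hqi hin (by omega) (by omega)
          omega
      have S5' : ∀ i, j < i → i < n → v i = i := fun i h1 h2 => S5 n i h1 h2 (by omega)
      have S6 : ∀ i, m ≤ i → i < j → v i = i + 1 := by
        intro i
        induction i using Nat.strong_induction_on with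
        | _ i ih =>
          intro hmi hij
          have hin : i < n := by omega
          by_contra hne
          have hcm : v i ≠ m := fun h => by
            have := hinj 0 (by omega) i hin (by omega); omega
          have hclow : ¬ v i ≤ m - 2 := by
            intro h
            have h1 : v (v i + 1) = v i := by
              have := hsm (v i + 1) (by omega) (by omega)
              omega
            have := hinj (v i + 1) (by omega) i hin h1
            omega
          have hcm1 : v i ≠ m - 1 := fun h => by
            have := hinj i hin j hjn (by omega); omega
          have hcmid : ∀ x, m ≤ x → x < i → v i ≠ x + 1 := by
            intro x hmx hxi heq
            have h1 : v x = x + 1 := ih x hxi hmx (by omega)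
            have := hinj i hin x (by omega) (by omega)
            omega
          have hchigh : ∀ x, j < x → x < n → v i ≠ x := by
            intro x hjx hxn heq
            have := hinj i hin x hxn (by rw [heq, S5' x hjx hxn])
            omega
          have hvub : v i ≤ j := by
            have h1 := hlt i hin
            by_contra hcon
            push_neg at hcon
            exact hchigh (v i) hcon h1 rfl
          have hvlb : i + 2 ≤ v i := by
            rcases Nat.lt_or_ge (v i) (m + 1) with h | h
            · omega
            · rcases Nat.lt_or_ge (v i) (i + 1) with h2 | h2
              · exfalso; exact hcmid (v i - 1) (by omega) (by omega) (by omega)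
              · omega
          -- position of i + 1
          obtain ⟨q, hqn, hq⟩ := hsurj (i+1) (by omega)
          have hqlb : i < q := by
            have h0 : q ≠ 0 := fun h => by rw [h] at hq; omega
            have h1 : ∀ x, 1 ≤ x → x < m → q ≠ x := by
              intro x hx1 hxm heq
              rw [heq, hsm x hx1 hxm] at hq
              omega
            have h2 : ∀ x, m ≤ x → x < i → q ≠ x := by
              intro x hmx hxi heq
              rw [heq, ih x hxi hmx (by omega)] at hq
              omega
            have h3 : q ≠ i := fun h => by rw [h] at hq; omega
            by_contra hcon
            push_neg at hcon
            rcases Nat.lt_or_ge q 1 with h | h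
            · exact h0 (by omega)
            · rcases Nat.lt_or_ge q m with hh | hh
              · exact h1 q h hh rfl
              · rcases Nat.lt_or_ge q i with hh2 | hh2
                · exact h2 q hh hh2 rfl
                · exact h3 (by omega)
          have hqub : q < j := by
            have hjq : q ≠ j := fun h => by rw [h] at hq; omega
            have h4 : ∀ x, j < x → x < n → q ≠ x := by
              intro x hjx hxn heq
              rw [heq, S5' x hjx hxn] at hq
              omega
            by_contra hcon
            push_neg at hcon
            rcases Nat.lt_or_ge j q with h | h
            · exact h4 q h hqn rfl
            · exact hjq (by omega)
          have := big_inc i q hqlb (by omega) (by omega) (by omega)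
          omega
      refine Or.inr (Or.inr ⟨m, j, hm2, hjm, hjn, ?_⟩)
      intro i hin
      rcases sigmaFun_cases m j i hm2 hjm with ⟨h, e⟩ | ⟨h1, h2, e⟩ | ⟨h1, h2, e⟩ | ⟨h, e⟩ | ⟨h, e⟩
      · rw [e, h]; exact hv0
      · rw [e]; exact hsm i h1 h2
      · rw [e]; exact S6 i h1 h2
      · rw [e, h]; exact hj
      · rw [e]; exact S5' i h hin
  · -- Case B : k ≥ 1, claim v = swapFun k
    have hposgen : ∀ w, k ≤ w → w < n → v k ≠ w → ∀ q, q < n → v q = w → k < q := by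
      intro w hkw hwn hvkw q hqn hq
      rcases Nat.lt_trichotomy q k with h | h | h
      · exfalso; rw [hprefix q h] at hq; omega
      · exfalso; rw [h] at hq; exact hvkw hq
      · exact h
    have hmk1 : v k = k + 1 := by
      by_contra hc
      have hm2 : k + 2 ≤ m := by omega
      obtain ⟨q, hqn, hq⟩ := hsurj k (by omega)
      obtain ⟨q', hq'n, hq'⟩ := hsurj (k+1) (by omega)
      have hkq : k < q := hposgen k (le_refl k) (by omega) (by omega) q hqn hq
      have hkq' : k < q' := hposgen (k+1) (by omega) (by omega) (by omega) q' hq'n hq'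
      rcases Nat.lt_trichotomy q q' with h | h | h
      · exact h1423 (k-1) k q q' (by omega) hkq h hq'n
          (by rw [hprefix (k-1) (by omega)]; omega)
      · exfalso; rw [h] at hq; omega
      · exact h321 k q' q hkq' h hqn (by omega)
    obtain ⟨q, hqn, hq⟩ := hsurj k (by omega)
    have hkq : k < q := hposgen k (le_refl k) (by omega) (by omega) q hqn hq
    have hqk1 : q = k + 1 := by
      by_contra hc
      have hq2 : k + 2 ≤ q := by omega
      have hk1n : k + 1 < n := by omega
      have hvk1 : k + 2 ≤ v (k+1) := by
        have h1 : v (k+1) ≠ k := fun h => by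
          have := hinj (k+1) hk1n q hqn (by omega); omega
        have h2 : v (k+1) ≠ k + 1 := fun h => by
          have := hinj k hkn (k+1) hk1n (by omega); omega
        have h3 : ∀ x, x < k → v (k+1) ≠ x := fun x hx h => by
          have := hinj (k+1) hk1n x (by omega) (by rw [h, hprefix x hx])
          omega
        have h4 := hlt (k+1) hk1n
        by_contra hcon
        push_neg at hcon
        rcases Nat.lt_or_ge (v (k+1)) k with h | h
        · exact h3 (v (k+1)) h rfl
        · omega
      exact hF k q (by omega) hqn (by omega) (by omega)
    have hvk1 : v (k+1) = k := by rw [hqk1] at hq; exact hq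
    have tail : ∀ i, i < n → k + 2 ≤ i → v i = i := by
      intro i
      induction i using Nat.strong_induction_on with
      | _ i ih =>
        intro hin hik2
        by_contra hne
        have hvi : i < v i := by
          have hub := hlt i hin
          rcases Nat.lt_trichotomy (v i) i with h | h | h
          · exfalso
            rcases Nat.lt_or_ge (v i) k with h2 | h2
            · have h3 : v (v i) = v i := hprefix (v i) h2
              have := hinj (v i) (by omega) i hin h3
              omega
            · rcases Nat.lt_or_ge (v i) (k+1) with h3 | h3
              · have : v i = k := by omega
                have := hinj (k+1) (by omega) i hin (by omega)
                omega
              · rcases Nat.lt_or_ge (v i) (k+2) with h4 | h4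
                · have : v i = k + 1 := by omega
                  have := hinj k (by omega) i hin (by omega)
                  omega
                · have h5 : v (v i) = v i := ih (v i) h (by omega) h4
                  have := hinj (v i) (by omega) i hin h5
                  omega
          · exact absurd h hne
          · exact h
        obtain ⟨q2, hq2n, hq2⟩ := hsurj i hin
        have hq2i : i < q2 := by
          rcases Nat.lt_trichotomy q2 i with h | h | h
          · exfalso
            rcases Nat.lt_or_ge q2 k with h2 | h2
            · rw [hprefix q2 h2] at hq2; omega
            · rcases Nat.lt_or_ge q2 (k+1) with h3 | h3
              · have : q2 = k := by omega
                rw [this, hmk1] at hq2; omega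
              · rcases Nat.lt_or_ge q2 (k+2) with h4 | h4
                · have : q2 = k + 1 := by omega
                  rw [this, hvk1] at hq2; omega
                · rw [ih q2 h hq2n h4] at hq2; omega
          · exfalso; rw [h] at hq2; omega
          · exact h
        exact h2143 k (k+1) i q2 (by omega) (by omega) hq2i hq2n (by omega)
    refine Or.inr (Or.inl ⟨k, by omega, ?_⟩)
    intro i hin
    rcases swapFun_cases k i with ⟨h, e⟩ | ⟨h, e⟩ | ⟨h1, h2, e⟩
    · rw [e, h]; exact hmk1
    · rw [e, h]; exact hvk1
    · rw [e]
      rcases Nat.lt_or_ge i k with hh | hh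
      · exact hprefix i hh
      · exact tail i hin (by omega)


lemma complete {n : ℕ} (π : Equiv.Perm (Fin n))
    (hFish : IsFishburn π) (hA1 : Avoids π ![3,2,1]) (hA2 : Avoids π ![1,4,2,3])
    (hA3 : Avoids π ![2,1,4,3]) :
    π = 1 ∨ ∃ p ∈ pairs n, gmap n p = π := by
  obtain ⟨v, hv⟩ : ∃ v : ℕ → ℕ, ∀ (i : ℕ) (h : i < n), v i = (π ⟨i, h⟩ : ℕ) :=
    ⟨fun i => if h : i < n then (π ⟨i, h⟩ : ℕ) else 0, fun i h => dif_pos h⟩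
  have key := classify n v
    (fun i hi => by rw [hv i hi]; exact (π ⟨i, hi⟩).isLt)
    (fun i hi j hj e => by
      rw [hv i hi, hv j hj] at e
      have := π.injective (Fin.val_injective e)
      exact congrArg Fin.val this)
    (fun w hw => by
      refine ⟨(π.symm ⟨w, hw⟩).val, (π.symm ⟨w, hw⟩).isLt, ?_⟩
      rw [hv _ (π.symm ⟨w, hw⟩).isLt]
      have he : (⟨(π.symm ⟨w, hw⟩).val, (π.symm ⟨w, hw⟩).isLt⟩ : Fin n) =
          π.symm ⟨w, hw⟩ := rfl
      rw [he, Equiv.apply_symm_apply])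
    (fun a b c hab hbc hcn => by
      rintro ⟨H1, H2⟩
      have han : a < n := by omega
      have hbn : b < n := by omega
      rw [hv a han, hv b hbn] at H1
      rw [hv b hbn, hv c hcn] at H2
      exact hA1 ((contains321_iff π).mpr
        ⟨⟨a, by omega⟩, ⟨b, by omega⟩, ⟨c, by omega⟩, Fin.mk_lt_mk.mpr hab,
          Fin.mk_lt_mk.mpr hbc, Fin.lt_def.mpr H1, Fin.lt_def.mpr H2⟩))
    (fun a b c d hab hbc hcd hdn => by
      rintro ⟨H1, H2, H3⟩
      have han : a < n := by omega
      have hbn : b < n := by omega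
      have hcn : c < n := by omega
      rw [hv a han, hv c hcn] at H1
      rw [hv c hcn, hv d hdn] at H2
      rw [hv d hdn, hv b hbn] at H3
      exact hA2 ((contains1423_iff π).mpr
        ⟨⟨a, by omega⟩, ⟨b, by omega⟩, ⟨c, by omega⟩, ⟨d, by omega⟩,
          Fin.mk_lt_mk.mpr hab, Fin.mk_lt_mk.mpr hbc, Fin.mk_lt_mk.mpr hcd,
          Fin.lt_def.mpr H1, Fin.lt_def.mpr H2, Fin.lt_def.mpr H3⟩))
    (fun a b c d hab hbc hcd hdn => by
      rintro ⟨H1, H2, H3⟩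
      have han : a < n := by omega
      have hbn : b < n := by omega
      have hcn : c < n := by omega
      rw [hv b hbn, hv a han] at H1
      rw [hv a han, hv d hdn] at H2
      rw [hv d hdn, hv c hcn] at H3
      exact hA3 ((contains2143_iff π).mpr
        ⟨⟨a, by omega⟩, ⟨b, by omega⟩, ⟨c, by omega⟩, ⟨d, by omega⟩,
          Fin.mk_lt_mk.mpr hab, Fin.mk_lt_mk.mpr hbc, Fin.mk_lt_mk.mpr hcd,
          Fin.lt_def.mpr H1, Fin.lt_def.mpr H2, Fin.lt_def.mpr H3⟩))
    (fun i j hij hjn hasc heq => by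
      have hin : i < n := by omega
      have hin1 : i + 1 < n := by omega
      refine hFish ⟨i, j, hij, hjn, ?_, ?_, ?_⟩
      · rw [Fin.lt_def, ← hv i hin, ← hv (i+1) hin1]; exact hasc
      · rw [Fin.lt_def, ← hv j hjn, ← hv i hin]; omega
      · rw [← hv i hin, ← hv j hjn]; exact heq)
  rcases key with hcase | ⟨k, hkn, hcase⟩ | ⟨m, j, hm2, hmj, hjn, hcase⟩
  · left
    refine Equiv.ext fun x => Fin.val_injective ?_
    have := hcase x.val x.isLt
    rw [hv x.val x.isLt] at this
    simpa using this
  · right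
    refine ⟨(k, k+1), mem_pairs.mpr ⟨by omega, hkn⟩, ?_⟩
    have hkk : k < k + 1 := by omega
    rw [gmap_swap hkk hkn rfl]
    refine Equiv.ext fun x => Fin.val_injective ?_
    have := hcase x.val x.isLt
    rw [hv x.val x.isLt] at this
    rw [swapPerm_apply]
    simpa using this.symm
  · right
    refine ⟨(m - 2, j), mem_pairs.mpr ⟨by omega, hjn⟩, ?_⟩
    have hmj2 : m - 2 < j := by omega
    have hne : j ≠ m - 2 + 1 := by omega
    rw [gmap_sigma hmj2 hjn hne]
    refine Equiv.ext fun x => Fin.val_injective ?_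
    have := hcase x.val x.isLt
    rw [hv x.val x.isLt] at this
    rw [sigmaPerm_apply]
    have em : m - 2 + 2 = m := by omega
    rw [em]
    simpa using this.symm

lemma bridge {n : ℕ} (π : Equiv.Perm (Fin n)) (F : ℕ → ℕ)
    (hFv : ∀ x : Fin n, (π x : ℕ) = F x)
    (no321 : ∀ a b c : ℕ, a < b → b < c → ¬(F b < F a ∧ F c < F b))
    (no1423 : ∀ a b c d : ℕ, a < b → b < c → c < d → ¬(F a < F c ∧ F c < F d ∧ F d < F b))
    (no2143 : ∀ a b c d : ℕ, a < b → b < c → c < d → ¬(F b < F a ∧ F a < F d ∧ F d < F c))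
    (noF : ∀ i j : ℕ, i + 1 < j → F i < F (i+1) → F i ≠ F j + 1) :
    IsFishburn π ∧ Avoids π ![3,2,1] ∧ Avoids π ![1,4,2,3] ∧ Avoids π ![2,1,4,3] := by
  have hFv' : ∀ (i : ℕ) (h : i < n), (π ⟨i, h⟩ : ℕ) = F i := fun i h => hFv ⟨i, h⟩
  refine ⟨?_, ?_, ?_, ?_⟩
  · rintro ⟨i, j, hij, hjn, h1, h2, h3⟩
    have hin : i < n := by omega
    have hin1 : i + 1 < n := by omega
    have n1 := Fin.lt_def.mp h1
    rw [hFv' i hin, hFv' (i+1) hin1] at n1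
    rw [hFv' i hin, hFv' j hjn] at h3
    exact noF i j hij n1 h3
  · intro hc
    obtain ⟨a, b, c, hab, hbc, H1, H2⟩ := (contains321_iff π).mp hc
    refine no321 a.val b.val c.val hab hbc ⟨?_, ?_⟩
    · rw [← hFv a, ← hFv b]; exact Fin.lt_def.mp H1
    · rw [← hFv b, ← hFv c]; exact Fin.lt_def.mp H2
  · intro hc
    obtain ⟨a, b, c, d, hab, hbc, hcd, H1, H2, H3⟩ := (contains1423_iff π).mp hc
    refine no1423 a.val b.val c.val d.val hab hbc hcd ⟨?_, ?_, ?_⟩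
    · rw [← hFv a, ← hFv c]; exact Fin.lt_def.mp H1
    · rw [← hFv c, ← hFv d]; exact Fin.lt_def.mp H2
    · rw [← hFv d, ← hFv b]; exact Fin.lt_def.mp H3
  · intro hc
    obtain ⟨a, b, c, d, hab, hbc, hcd, H1, H2, H3⟩ := (contains2143_iff π).mp hc
    refine no2143 a.val b.val c.val d.val hab hbc hcd ⟨?_, ?_, ?_⟩
    · rw [← hFv b, ← hFv a]; exact Fin.lt_def.mp H1
    · rw [← hFv a, ← hFv d]; exact Fin.lt_def.mp H2
    · rw [← hFv d, ← hFv c]; exact Fin.lt_def.mp H3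

theorem fishburn_321_1423_2143 (n : ℕ) :
    {π : Equiv.Perm (Fin n) | IsFishburn π ∧ Avoids π ![3, 2, 1] ∧ Avoids π ![1, 4, 2, 3] ∧ Avoids π ![2, 1, 4, 3]}.ncard = n.choose 2 + 1 := by
  classical
  have hset : {π : Equiv.Perm (Fin n) | IsFishburn π ∧ Avoids π ![3, 2, 1] ∧
      Avoids π ![1, 4, 2, 3] ∧ Avoids π ![2, 1, 4, 3]} =
      ↑(insert (1 : Equiv.Perm (Fin n)) ((pairs n).image (gmap n))) := by
    ext π
    constructor
    · rintro ⟨h1, h2, h3, h4⟩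
      have hc := complete π h1 h2 h3 h4
      rw [Finset.mem_coe, Finset.mem_insert, Finset.mem_image]
      rcases hc with h | ⟨p, hp, he⟩
      · exact Or.inl h
      · exact Or.inr ⟨p, hp, he⟩
    · intro hmem
      rw [Finset.mem_coe, Finset.mem_insert, Finset.mem_image] at hmem
      rw [Set.mem_setOf_eq]
      rcases hmem with rfl | ⟨⟨a, b⟩, hp, rfl⟩
      · exact bridge 1 (fun i => i) (fun x => rfl)
          (fun a b c h1 h2 => show ¬(b < a ∧ c < b) by omega)
          (fun a b c d h1 h2 h3 => show ¬(a < c ∧ c < d ∧ d < b) by omega)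
          (fun a b c d h1 h2 h3 => show ¬(b < a ∧ a < d ∧ d < c) by omega)
          (fun i j h1 h2 => show i ≠ j + 1 by omega)
      · rw [mem_pairs] at hp
        obtain ⟨hab, hbn⟩ := hp
        by_cases e1 : b = a + 1
        · rw [gmap_swap hab hbn e1]
          exact bridge _ (swapFun a) (fun x => rfl)
            (swap_no321 a) (swap_no1423 a) (swap_no2143 a)
            (fun i j h1 h2 => swap_noF a i j h1 h2)
        · have h2m : 2 ≤ a + 2 := by omega
          have hmb : a + 2 ≤ b := by omega
          rw [gmap_sigma hab hbn e1]
          exact bridge _ (sigmaFun (a+2) b) (fun x => rfl)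
            (sigma_no321 (a+2) b h2m hmb)
            (sigma_no1423 (a+2) b h2m hmb)
            (sigma_no2143 (a+2) b h2m hmb)
            (fun i j h1 h2 => sigma_noF (a+2) b h2m hmb i j h1 h2)
  rw [hset, Set.ncard_coe_finset, target_card]
end
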